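/- arXiv:1909.11518 — 9 statements merged into one kernel-verified Lean document; each statement's English description precedes it below -/
import Mathlib

section
/- For the standard Gaussian distribution, the Mills-type ratio Φ(x)(1−Φ(x))/φ(x) is bounded above by Φ(0)(1−Φ(0))/φ(0) = (1/2)√(π/2) for all real x. -/
open Real MeasureTheory Set

noncomputable def gaussPdf (x : ℝ) : ℝ := (Real.sqrt (2 * π))⁻¹ * Real.exp (-x ^ 2 / 2)

noncomputable def gaussCdf (x : ℝ) : ℝ := ∫ u in Set.Iic x, gaussPdf u

open Filter Topology ProbabilityTheory

/-! Since `4Φ(1 - Φ) = 1 - (2Φ - 1)²` and `exp(-x²/2) = √(2π) φ(x)`, the bound is Pólya's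
inequality `(2Φ(x) - 1)² ≥ 1 - exp(-x²/2)`, with equality at `x = 0`. Its gap
`J = (2Φ - 1)² - 1 + exp(-x²/2)` (`polyaGap`) is even, vanishes at `0` and at `∞`, and satisfies
`J' = 4φ K` with `K(x) = 2Φ(x) - 1 - √(2π) x / 4` (`polyaGapFactor`). As `K` is concave on
`[0, ∞)` with `K(0) = 0`, it changes sign at most once there, from `+` to `-`; so on `[0, ∞)`
`J` first increases from `0` and then decreases to `0`, hence `J ≥ 0`. -/

lemma gaussPdf_eq_gaussianPDFReal : gaussPdf = gaussianPDFReal 0 1 := by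
  ext x
  simp [gaussPdf, gaussianPDFReal]

lemma continuous_gaussPdf : Continuous gaussPdf := by
  unfold gaussPdf
  fun_prop

lemma gaussPdf_pos (x : ℝ) : 0 < gaussPdf x := by
  unfold gaussPdf
  positivity

lemma gaussPdf_neg (x : ℝ) : gaussPdf (-x) = gaussPdf x := by
  simp [gaussPdf]

lemma sqrt_two_pi_mul_gaussPdf (x : ℝ) : √(2 * π) * gaussPdf x = exp (-x ^ 2 / 2) := by
  rw [gaussPdf, mul_inv_cancel_left₀ (by positivity)]

lemma antitoneOn_gaussPdf : AntitoneOn gaussPdf (Ici 0) := by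
  intro x hx y hy hxy
  unfold gaussPdf
  gcongr

lemma integrable_gaussPdf : Integrable gaussPdf := by
  rw [gaussPdf_eq_gaussianPDFReal]
  exact integrable_gaussianPDFReal 0 1

lemma integral_gaussPdf : ∫ x, gaussPdf x = 1 := by
  rw [gaussPdf_eq_gaussianPDFReal]
  exact integral_gaussianPDFReal_eq_one 0 one_ne_zero

lemma gaussCdf_add_integral_Ioi (x : ℝ) : gaussCdf x + ∫ u in Ioi x, gaussPdf u = 1 := by
  rw [gaussCdf, intervalIntegral.integral_Iic_add_Ioi integrable_gaussPdf.integrableOn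
    integrable_gaussPdf.integrableOn, integral_gaussPdf]

lemma gaussCdf_neg (x : ℝ) : gaussCdf (-x) = 1 - gaussCdf x := by
  have hreflect : ∫ u in Iic (-x), gaussPdf u = ∫ u in Ioi x, gaussPdf u := by
    rw [← integral_comp_neg_Ioi]
    simp only [gaussPdf_neg]
  rw [gaussCdf, hreflect, ← gaussCdf_add_integral_Ioi x, add_sub_cancel_left]

lemma gaussCdf_zero : gaussCdf 0 = 1 / 2 := by
  have h := gaussCdf_neg 0
  rw [neg_zero] at h
  linarith

lemma hasDerivAt_gaussCdf (x : ℝ) : HasDerivAt gaussCdf (gaussPdf x) x := by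
  have hcdf : gaussCdf = fun y => gaussCdf 0 + ∫ t in (0 : ℝ)..y, gaussPdf t := by
    ext y
    rw [← intervalIntegral.integral_Iic_sub_Iic integrable_gaussPdf.integrableOn
      integrable_gaussPdf.integrableOn, gaussCdf, gaussCdf, add_sub_cancel]
  rw [hcdf]
  exact (continuous_gaussPdf.integral_hasStrictDerivAt 0 x).hasDerivAt.const_add _

lemma tendsto_gaussCdf_atTop : Tendsto gaussCdf atTop (𝓝 1) := by
  have htail : Tendsto (fun x => ∫ u in Ioi x, gaussPdf u) atTop (𝓝 0) :=
    tendsto_integral_Ioi_zero tendsto_id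
  have h := htail.const_sub 1
  rw [sub_zero] at h
  exact h.congr fun x => by linarith [gaussCdf_add_integral_Ioi x]

lemma nonneg_of_hasDerivAt_of_deriv_sign_change {f f' : ℝ → ℝ} {a l : ℝ}
    (hf : ∀ x ∈ Ici a, HasDerivAt f (f' x) x)
    (hf' : ∀ x ∈ Ici a, ∀ y, x ≤ y → 0 ≤ f' y → 0 ≤ f' x)
    (ha : 0 ≤ f a) (hlim : Tendsto f atTop (𝓝 l)) (hl : 0 ≤ l) {x : ℝ} (hx : a ≤ x) :
    0 ≤ f x := by
  have hcont : ContinuousOn f (Ici a) := fun y hy => (hf y hy).continuousAt.continuousWithinAt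
  by_cases hfx : 0 ≤ f' x
  · have hmono : MonotoneOn f (Icc a x) :=
      monotoneOn_of_hasDerivWithinAt_nonneg (convex_Icc a x) (hcont.mono Icc_subset_Ici_self)
        (fun y hy => (hf y (interior_subset hy).1).hasDerivWithinAt)
        fun y hy => hf' y (interior_subset hy).1 x (interior_subset hy).2 hfx
    exact ha.trans (hmono (left_mem_Icc.2 hx) (right_mem_Icc.2 hx) hx)
  · have hanti : AntitoneOn f (Ici x) :=
      antitoneOn_of_hasDerivWithinAt_nonpos (convex_Ici x) (hcont.mono (Ici_subset_Ici.2 hx))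
        (fun y hy => (hf y (hx.trans (interior_subset hy))).hasDerivWithinAt)
        (fun y hy => le_of_not_ge fun hfy => hfx (hf' x hx y (interior_subset hy) hfy))
    refine hl.trans (le_of_tendsto hlim ?_)
    filter_upwards [eventually_ge_atTop x] with y hy
    exact hanti self_mem_Ici hy hy

lemma ConcaveOn.nonneg_of_le_of_nonneg {K : ℝ → ℝ} (hK : ConcaveOn ℝ (Ici 0) K) (hK0 : K 0 = 0)
    {x y : ℝ} (hx : 0 ≤ x) (hxy : x ≤ y) (hy : 0 ≤ K y) : 0 ≤ K x := by
  have hseg : x ∈ segment ℝ 0 y := by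
    rw [segment_eq_Icc (hx.trans hxy)]
    exact ⟨hx, hxy⟩
  simpa [hK0, hy] using hK.min_le_of_mem_segment self_mem_Ici (hx.trans hxy) hseg

noncomputable def polyaGap (x : ℝ) : ℝ := (2 * gaussCdf x - 1) ^ 2 - 1 + exp (-x ^ 2 / 2)

noncomputable def polyaGapFactor (x : ℝ) : ℝ := 2 * gaussCdf x - 1 - √(2 * π) / 4 * x

lemma polyaGap_neg (x : ℝ) : polyaGap (-x) = polyaGap x := by
  simp only [polyaGap, gaussCdf_neg]
  ring_nf

lemma polyaGap_zero : polyaGap 0 = 0 := by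
  simp [polyaGap, gaussCdf_zero]

lemma polyaGapFactor_zero : polyaGapFactor 0 = 0 := by
  simp [polyaGapFactor, gaussCdf_zero]

lemma hasDerivAt_polyaGapFactor (x : ℝ) :
    HasDerivAt polyaGapFactor (2 * gaussPdf x - √(2 * π) / 4) x := by
  unfold polyaGapFactor
  exact ((((hasDerivAt_gaussCdf x).const_mul 2).sub_const 1).sub
    ((hasDerivAt_id' x).const_mul (√(2 * π) / 4))).congr_deriv (by ring)

lemma hasDerivAt_polyaGap (x : ℝ) :
    HasDerivAt polyaGap (4 * gaussPdf x * polyaGapFactor x) x := by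
  have hexp : HasDerivAt (fun y => exp (-y ^ 2 / 2)) (-x * exp (-x ^ 2 / 2)) x :=
    (((hasDerivAt_pow 2 x).fun_neg).div_const 2).exp.congr_deriv (by ring)
  unfold polyaGap
  refine ((((((hasDerivAt_gaussCdf x).const_mul 2).sub_const 1).pow 2).sub_const 1).add
    hexp).congr_deriv ?_
  rw [← sqrt_two_pi_mul_gaussPdf, polyaGapFactor]
  ring

lemma concaveOn_polyaGapFactor : ConcaveOn ℝ (Ici 0) polyaGapFactor := by
  have hderiv : deriv polyaGapFactor = fun x => 2 * gaussPdf x - √(2 * π) / 4 :=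
    funext fun x => (hasDerivAt_polyaGapFactor x).deriv
  refine AntitoneOn.concaveOn_of_deriv (convex_Ici 0)
    (fun x _ => (hasDerivAt_polyaGapFactor x).continuousAt.continuousWithinAt)
    (fun x _ => (hasDerivAt_polyaGapFactor x).differentiableAt.differentiableWithinAt) ?_
  rw [hderiv, interior_Ici]
  intro x hx y hy hxy
  have := antitoneOn_gaussPdf (Ioi_subset_Ici_self hx) (Ioi_subset_Ici_self hy) hxy
  dsimp only
  linarith

lemma tendsto_polyaGap_atTop : Tendsto polyaGap atTop (𝓝 0) := by
  have hexp : Tendsto (fun x : ℝ => exp (-x ^ 2 / 2)) atTop (𝓝 0) :=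
    tendsto_exp_atBot.comp <|
      (tendsto_neg_atBot_iff.2 (tendsto_pow_atTop two_ne_zero)).atBot_div_const two_pos
  have h := ((((tendsto_gaussCdf_atTop.const_mul 2).sub_const 1).pow 2).sub_const 1).add hexp
  norm_num at h
  exact h

lemma polyaGap_nonneg (x : ℝ) : 0 ≤ polyaGap x := by
  wlog hx : 0 ≤ x generalizing x
  · simpa [polyaGap_neg] using this (-x) (by linarith)
  refine nonneg_of_hasDerivAt_of_deriv_sign_change (fun y _ => hasDerivAt_polyaGap y) ?_
    polyaGap_zero.ge tendsto_polyaGap_atTop le_rfl hx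
  intro y hy z hyz hz
  have hKz : 0 ≤ polyaGapFactor z :=
    nonneg_of_mul_nonneg_right hz (by linarith [gaussPdf_pos z])
  have hKy := concaveOn_polyaGapFactor.nonneg_of_le_of_nonneg polyaGapFactor_zero hy hyz hKz
  have hφy := gaussPdf_pos y
  positivity

lemma gaussCdf_mul_one_sub_le (x : ℝ) :
    gaussCdf x * (1 - gaussCdf x) ≤ √(2 * π) / 4 * gaussPdf x := by
  have hJ := polyaGap_nonneg x
  rw [polyaGap, ← sqrt_two_pi_mul_gaussPdf] at hJ
  linarith

lemma sqrt_two_pi_div_four : √(2 * π) / 4 = 1 / 2 * √(π / 2) := by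
  rw [show 2 * π = 2 ^ 2 * (π / 2) by ring, sqrt_mul (by positivity), sqrt_sq zero_le_two]
  ring

/-- The Gaussian Mills-type ratio `Φ(x)(1-Φ(x))/φ(x)` is maximized at `0`, where its
value is `(1/2)√(π/2)`. -/
theorem stmt1 :
    gaussCdf 0 * (1 - gaussCdf 0) / gaussPdf 0 = (1 / 2) * Real.sqrt (π / 2) ∧
    ∀ x : ℝ, gaussCdf x * (1 - gaussCdf x) / gaussPdf x ≤ (1 / 2) * Real.sqrt (π / 2) := by
  rw [← sqrt_two_pi_div_four]
  refine ⟨?_, fun x => (div_le_iff₀ (gaussPdf_pos x)).2 (gaussCdf_mul_one_sub_le x)⟩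
  rw [gaussCdf_zero, div_eq_iff (gaussPdf_pos 0).ne', div_mul_eq_mul_div _ 4,
    sqrt_two_pi_mul_gaussPdf]
  norm_num
end

section
/- Let X be standard Gaussian and let g solve g'(x) − x g(x) = h(x) − E[h(X)] with g(x) = e^{x²/2} ∫_{-∞}^x (h(u) − E[h(X)]) e^{-u²/2} du. If h is absolutely continuous with |h'| ≤ κ₂, then |g(x)| ≤ κ₂ for all x. -/
open Real MeasureTheory Set

/-!
Write `φ u = exp (-u ^ 2 / 2)` and `c = E h(X)`, so that `∫ (h - c) φ = 0`. As `h` is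
`κ₂`-Lipschitz, both `κ₂ u - (h u - c)` and `κ₂ u + (h u - c)` are nondecreasing, and they still
integrate to zero against `φ` because `∫ u φ(u) du = 0`. A nondecreasing `k` with `∫ k φ = 0`
satisfies `∫_{-∞}^x k φ ≤ 0` for every `x`: if `k x ≤ 0` the integrand is nonpositive on
`(-∞, x]`, and otherwise it is nonnegative on `(x, ∞)`. Together with
`∫_{-∞}^x u φ(u) du = -φ(x)` this gives `|∫_{-∞}^x (h - c) φ| ≤ κ₂ φ(x)`, and
`g x = φ(x)⁻¹ ∫_{-∞}^x (h - c) φ`.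
-/

open Filter Topology

theorem neg_sq_div_two_eq_neg_half_mul_sq (u : ℝ) : -u ^ 2 / 2 = -(1 / 2) * u ^ 2 := by ring

theorem integrable_exp_neg_sq_div_two : Integrable fun u : ℝ => exp (-u ^ 2 / 2) := by
  simpa only [neg_sq_div_two_eq_neg_half_mul_sq] using
    integrable_exp_neg_mul_sq (by norm_num : (0 : ℝ) < 1 / 2)

theorem integrable_mul_exp_neg_sq_div_two : Integrable fun u : ℝ => u * exp (-u ^ 2 / 2) := by
  simpa only [neg_sq_div_two_eq_neg_half_mul_sq] using
    integrable_mul_exp_neg_mul_sq (by norm_num : (0 : ℝ) < 1 / 2)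

theorem integral_exp_neg_sq_div_two : ∫ u : ℝ, exp (-u ^ 2 / 2) = √(2 * π) := by
  simpa only [neg_sq_div_two_eq_neg_half_mul_sq, div_div_eq_mul_div, div_one, mul_comm π 2] using
    integral_gaussian (1 / 2)

theorem integral_mul_exp_neg_sq_div_two : ∫ u : ℝ, u * exp (-u ^ 2 / 2) = 0 := by
  have hodd := integral_neg_eq_self (fun u : ℝ => u * exp (-u ^ 2 / 2)) volume
  simp only [neg_sq, neg_mul, integral_neg] at hodd
  linarith

theorem tendsto_exp_neg_sq_div_two_atBot : Tendsto (fun u : ℝ => exp (-u ^ 2 / 2)) atBot (𝓝 0) := by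
  have hsq : Tendsto (fun u : ℝ => u ^ 2) atBot atTop := by
    simpa only [sq, id] using tendsto_id.atBot_mul_atBot₀ tendsto_id
  exact tendsto_exp_atBot.comp ((tendsto_neg_atTop_atBot.comp hsq).atBot_div_const two_pos)

theorem setIntegral_Iic_mul_exp_neg_sq_div_two (x : ℝ) :
    ∫ u in Iic x, u * exp (-u ^ 2 / 2) = -exp (-x ^ 2 / 2) := by
  have hderiv (u : ℝ) : HasDerivAt (fun u : ℝ => -exp (-u ^ 2 / 2)) (u * exp (-u ^ 2 / 2)) u := by
    refine (((hasDerivAt_pow 2 u).fun_neg.div_const 2).exp).fun_neg.congr_deriv ?_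
    push_cast; ring
  rw [integral_Iic_of_hasDerivAt_of_tendsto' (fun u _ => hderiv u)
    integrable_mul_exp_neg_sq_div_two.integrableOn tendsto_exp_neg_sq_div_two_atBot.neg, neg_zero,
    sub_zero]

theorem setIntegral_Iic_mul_nonpos_of_monotone {μ : Measure ℝ} {k w : ℝ → ℝ} (hk : Monotone k)
    (hw : ∀ u, 0 ≤ w u) (hint : Integrable (fun u => k u * w u) μ)
    (hzero : ∫ u, k u * w u ∂μ = 0) (x : ℝ) :
    ∫ u in Iic x, k u * w u ∂μ ≤ 0 := by
  rcases le_or_gt (k x) 0 with hkx | hkx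
  · exact setIntegral_nonpos measurableSet_Iic fun u hu =>
      mul_nonpos_of_nonpos_of_nonneg ((hk hu).trans hkx) (hw u)
  · have hIoi : 0 ≤ ∫ u in Ioi x, k u * w u ∂μ :=
      setIntegral_nonneg measurableSet_Ioi fun u hu =>
        mul_nonneg (hkx.le.trans (hk hu.le)) (hw u)
    have hsplit :=
      intervalIntegral.integral_Iic_add_Ioi (b := x) hint.integrableOn hint.integrableOn
    linarith

theorem LipschitzWith.integrable_mul_exp_neg_sq_div_two {K : NNReal} {h : ℝ → ℝ}
    (hh : LipschitzWith K h) : Integrable fun u => h u * exp (-u ^ 2 / 2) := by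
  refine Integrable.mono' ((integrable_exp_neg_sq_div_two.const_mul |h 0|).add
      (_root_.integrable_mul_exp_neg_sq_div_two.abs.const_mul K))
    (hh.continuous.mul (by fun_prop)).aestronglyMeasurable (ae_of_all _ fun u => ?_)
  have hgrowth : |h u| ≤ |h 0| + K * |u| := by
    have := hh.dist_le_mul u 0
    rw [Real.dist_eq, Real.dist_eq, sub_zero] at this
    linarith [abs_sub_abs_le_abs_sub (h u) (h 0)]
  simp only [Pi.add_apply, norm_mul, Real.norm_eq_abs, abs_mul, abs_of_pos (exp_pos _)]
  nlinarith [exp_pos (-u ^ 2 / 2)]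

theorem neg_mul_exp_le_setIntegral_Iic_mul_exp {f : ℝ → ℝ} {κ : ℝ}
    (hf : Monotone fun u => κ * u - f u) (hint : Integrable fun u => f u * exp (-u ^ 2 / 2))
    (hzero : ∫ u, f u * exp (-u ^ 2 / 2) = 0) (x : ℝ) :
    -(κ * exp (-x ^ 2 / 2)) ≤ ∫ u in Iic x, f u * exp (-u ^ 2 / 2) := by
  have hlin := integrable_mul_exp_neg_sq_div_two.const_mul κ
  have hexpand : (fun u => (κ * u - f u) * exp (-u ^ 2 / 2)) =
      fun u => κ * (u * exp (-u ^ 2 / 2)) - f u * exp (-u ^ 2 / 2) := by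
    funext u; ring
  have hnonpos := setIntegral_Iic_mul_nonpos_of_monotone hf (fun u => (exp_pos _).le)
    (by rw [hexpand]; exact hlin.sub hint) (by
      rw [hexpand, integral_sub hlin hint, integral_const_mul, integral_mul_exp_neg_sq_div_two,
        hzero, mul_zero, sub_zero]) x
  rw [hexpand, integral_sub hlin.integrableOn hint.integrableOn, integral_const_mul,
    setIntegral_Iic_mul_exp_neg_sq_div_two] at hnonpos
  linarith

theorem abs_setIntegral_Iic_sub_mul_exp_le {h : ℝ → ℝ} {κ c : ℝ}
    (hLip : ∀ y z, |h y - h z| ≤ κ * |y - z|) (hint : Integrable fun u => h u * exp (-u ^ 2 / 2))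
    (hc : ∫ u, (h u - c) * exp (-u ^ 2 / 2) = 0) (x : ℝ) :
    |∫ u in Iic x, (h u - c) * exp (-u ^ 2 / 2)| ≤ κ * exp (-x ^ 2 / 2) := by
  have hint' : Integrable fun u => (h u - c) * exp (-u ^ 2 / 2) := by
    simpa only [sub_mul] using hint.sub' (integrable_exp_neg_sq_div_two.const_mul c)
  have hmono : Monotone fun u => κ * u - (h u - c) := fun y z hyz => by
    have := (le_abs_self _).trans (hLip z y)
    rw [abs_of_nonneg (sub_nonneg.mpr hyz)] at this
    linarith
  have hmono' : Monotone fun u => κ * u - -(h u - c) := fun y z hyz => by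
    have := (le_abs_self _).trans (hLip y z)
    rw [abs_sub_comm, abs_of_nonneg (sub_nonneg.mpr hyz)] at this
    linarith
  have hupper := neg_mul_exp_le_setIntegral_Iic_mul_exp hmono'
    (by simpa only [neg_mul] using hint'.fun_neg)
    (by simp only [neg_mul, integral_neg, hc, neg_zero]) x
  simp only [neg_mul, integral_neg, neg_le_neg_iff] at hupper
  exact abs_le.mpr ⟨neg_mul_exp_le_setIntegral_Iic_mul_exp hmono hint' hc x, hupper⟩

theorem integral_sub_integral_mul_gaussPdf_mul_exp_eq_zero {h : ℝ → ℝ}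
    (hint : Integrable fun u => h u * exp (-u ^ 2 / 2)) :
    ∫ u, (h u - ∫ v, h v * gaussPdf v) * exp (-u ^ 2 / 2) = 0 := by
  have hmean : ∫ v, h v * gaussPdf v = (√(2 * π))⁻¹ * ∫ u, h u * exp (-u ^ 2 / 2) := by
    rw [← integral_const_mul]
    simp only [gaussPdf, mul_left_comm]
  have hsqrt : √(2 * π) ≠ 0 := by positivity
  simp only [sub_mul]
  rw [integral_sub hint (integrable_exp_neg_sq_div_two.const_mul _), integral_const_mul,
    integral_exp_neg_sq_div_two, hmean, mul_right_comm, inv_mul_cancel₀ hsqrt, one_mul, sub_self]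

/-- Bound on the solution of the Gaussian Stein equation for Lipschitz `h`:
if `|h'| ≤ κ₂` (i.e. `h` is `κ₂`-Lipschitz) then `|g(x)| ≤ κ₂` for all `x`. -/
theorem stmt3 (h : ℝ → ℝ) (κ₂ : ℝ)
    (hLip : ∀ y z : ℝ, |h y - h z| ≤ κ₂ * |y - z|)
    (g : ℝ → ℝ)
    (hg : ∀ x, g x = Real.exp (x ^ 2 / 2) *
      ∫ u in Set.Iic x, (h u - ∫ v, h v * gaussPdf v) * Real.exp (-u ^ 2 / 2)) :
    ∀ x : ℝ, |g x| ≤ κ₂ := by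
  have hint : Integrable fun u => h u * exp (-u ^ 2 / 2) :=
    (LipschitzWith.of_dist_le' (K := κ₂) hLip).integrable_mul_exp_neg_sq_div_two
  intro x
  rw [hg x, abs_mul, abs_of_pos (exp_pos _)]
  calc exp (x ^ 2 / 2) * |∫ u in Iic x, (h u - ∫ v, h v * gaussPdf v) * exp (-u ^ 2 / 2)|
      ≤ exp (x ^ 2 / 2) * (κ₂ * exp (-x ^ 2 / 2)) := by
        gcongr
        exact abs_setIntegral_Iic_sub_mul_exp_le hLip hint
          (integral_sub_integral_mul_gaussPdf_mul_exp_eq_zero hint) x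
    _ = κ₂ := by rw [mul_left_comm, ← exp_add, neg_div, add_neg_cancel, exp_zero, mul_one]
end

section
/- Let g_ξ be the solution of the Poisson Stein equation λ g(x+1) − x g(x) = 𝟙[x = ξ] − p(ξ) with g(0) = 0. Then sup_{x∈ℕ} |g_ξ(x)| ≤ max( P(ξ−1)/ξ , (1−P(ξ))/λ ), where P is the Poisson(λ) cdf (and P(−1) = 0, with the first term taken as 0 when ξ = 0). -/
open Real MeasureTheory Set

/-- Poisson(λ) pmf on ℕ. -/
noncomputable def poisPmf (lam : ℝ) (x : ℕ) : ℝ :=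
  Real.exp (-lam) * lam ^ x / (Nat.factorial x : ℝ)

/-- Poisson(λ) cdf on ℕ: `P(x) = Σ_{j ≤ x} p(j)`. -/
noncomputable def poisCdf (lam : ℝ) (x : ℕ) : ℝ :=
  ∑ j ∈ Finset.range (x + 1), poisPmf lam j

/-!
Multiplying the Stein equation by `p(x)` and using `x p(x) = λ p(x-1)` makes it telescope, so
`λ p(x) g(x+1) = Σ_{i ≤ x} p(i) (𝟙[i = ξ] - p(ξ)) = p(ξ) (𝟙[ξ ≤ x] - P(x))`.
Hence `|g(x+1)| = (p(ξ)/λ) · P(x)/p(x)` for `x < ξ` and `(p(ξ)/λ) · (1 - P(x))/p(x)` for `x ≥ ξ`.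
Log-concavity of `p` makes `P(x)/p(x)` increasing and `(1 - P(x))/p(x)` decreasing, so the two
cases are bounded by their values at `x = ξ - 1` and `x = ξ`, which are the two terms of the max.
-/

namespace PoissonStein

open Finset

variable {lam : ℝ}

lemma poisPmf_pos (hlam : 0 < lam) (n : ℕ) : 0 < poisPmf lam n := by
  unfold poisPmf; positivity

lemma succ_mul_poisPmf_succ (lam : ℝ) (n : ℕ) :
    ((n : ℝ) + 1) * poisPmf lam (n + 1) = lam * poisPmf lam n := by
  unfold poisPmf
  rw [Nat.factorial_succ, Nat.cast_mul, Nat.cast_succ, pow_succ]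
  field_simp

lemma hasSum_poisPmf (lam : ℝ) : HasSum (poisPmf lam) 1 := by
  have h := (NormedSpace.expSeries_div_hasSum_exp lam).mul_left (Real.exp (-lam))
  rw [← Real.exp_eq_exp_ℝ, ← Real.exp_add, neg_add_cancel, Real.exp_zero] at h
  exact h.congr_fun fun n => mul_div_assoc _ _ _

lemma hasSum_poisPmf_add_succ (lam : ℝ) (n : ℕ) :
    HasSum (fun k => poisPmf lam (k + (n + 1))) (1 - poisCdf lam n) :=
  (hasSum_nat_add_iff' (n + 1)).mpr (hasSum_poisPmf lam)

lemma poisCdf_nonneg (hlam : 0 < lam) (n : ℕ) : 0 ≤ poisCdf lam n :=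
  sum_nonneg fun i _ => (poisPmf_pos hlam i).le

lemma poisCdf_le_one (hlam : 0 < lam) (n : ℕ) : poisCdf lam n ≤ 1 :=
  sub_nonneg.mp <| (hasSum_poisPmf_add_succ lam n).nonneg fun _ => (poisPmf_pos hlam _).le

/-- Log-concavity: `p(n+1)/p(n) = λ/(n+1)` decreases in `n`. -/
lemma poisPmf_succ_mul_le (hlam : 0 < lam) {m n : ℕ} (hmn : m ≤ n) :
    poisPmf lam (n + 1) * poisPmf lam m ≤ poisPmf lam n * poisPmf lam (m + 1) := by
  have hn := succ_mul_poisPmf_succ lam n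
  have hm := succ_mul_poisPmf_succ lam m
  have hpn := poisPmf_pos hlam n
  have hpm := poisPmf_pos hlam m
  rw [← mul_le_mul_iff_right₀ (by positivity : (0 : ℝ) < ((n : ℝ) + 1) * ((m : ℝ) + 1))]
  calc ((n : ℝ) + 1) * ((m : ℝ) + 1) * (poisPmf lam (n + 1) * poisPmf lam m)
      = ((m : ℝ) + 1) * (lam * poisPmf lam n * poisPmf lam m) := by rw [← hn]; ring
    _ ≤ ((n : ℝ) + 1) * (lam * poisPmf lam n * poisPmf lam m) := by gcongr
    _ = ((n : ℝ) + 1) * ((m : ℝ) + 1) * (poisPmf lam n * poisPmf lam (m + 1)) := by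
        rw [mul_right_comm lam, ← hm]; ring

lemma monotone_poisCdf_div_poisPmf (hlam : 0 < lam) :
    Monotone fun x => poisCdf lam x / poisPmf lam x := by
  refine monotone_nat_of_le_succ fun x => ?_
  rw [div_le_div_iff₀ (poisPmf_pos hlam x) (poisPmf_pos hlam (x + 1))]
  have hshift : ∑ i ∈ range (x + 1), poisPmf lam (i + 1) ≤ poisCdf lam (x + 1) := by
    rw [poisCdf, sum_range_succ' _ (x + 1)]
    exact le_add_of_nonneg_right (poisPmf_pos hlam 0).le
  calc poisCdf lam x * poisPmf lam (x + 1)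
      = ∑ i ∈ range (x + 1), poisPmf lam (x + 1) * poisPmf lam i := by
        rw [poisCdf, sum_mul]; simp only [mul_comm]
    _ ≤ ∑ i ∈ range (x + 1), poisPmf lam x * poisPmf lam (i + 1) :=
        sum_le_sum fun i hi => poisPmf_succ_mul_le hlam (Nat.lt_succ_iff.mp (mem_range.mp hi))
    _ = (∑ i ∈ range (x + 1), poisPmf lam (i + 1)) * poisPmf lam x := by
        rw [sum_mul]; simp only [mul_comm]
    _ ≤ poisCdf lam (x + 1) * poisPmf lam x :=
        mul_le_mul_of_nonneg_right hshift (poisPmf_pos hlam x).le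

lemma antitone_one_sub_poisCdf_div_poisPmf (hlam : 0 < lam) :
    Antitone fun x => (1 - poisCdf lam x) / poisPmf lam x := by
  refine antitone_nat_of_succ_le fun x => ?_
  rw [div_le_div_iff₀ (poisPmf_pos hlam (x + 1)) (poisPmf_pos hlam x)]
  refine hasSum_le (fun k => ?_) ((hasSum_poisPmf_add_succ lam (x + 1)).mul_right _)
    ((hasSum_poisPmf_add_succ lam x).mul_right _)
  exact poisPmf_succ_mul_le hlam (by omega : x ≤ k + (x + 1))

lemma mul_poisPmf_mul_eq_sum_of_stein {h g : ℕ → ℝ} (hg0 : g 0 = 0)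
    (hsteq : ∀ x : ℕ, lam * g (x + 1) - (x : ℝ) * g x = h x) (x : ℕ) :
    lam * poisPmf lam x * g (x + 1) = ∑ i ∈ range (x + 1), poisPmf lam i * h i := by
  induction x with
  | zero => rw [sum_range_one, ← hsteq 0, hg0]; push_cast; ring
  | succ x ih =>
    have hstep := hsteq (x + 1)
    push_cast at hstep
    rw [sum_range_succ, ← ih, ← hstep, ← succ_mul_poisPmf_succ lam x]
    ring

lemma sum_poisPmf_mul_indicator_sub (lam : ℝ) (ξ x : ℕ) :
    ∑ i ∈ range (x + 1), poisPmf lam i * ((if i = ξ then (1 : ℝ) else 0) - poisPmf lam ξ)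
      = poisPmf lam ξ * ((if ξ ≤ x then (1 : ℝ) else 0) - poisCdf lam x) := by
  simp only [mul_sub, mul_ite, mul_one, mul_zero, sum_sub_distrib, sum_ite_eq', Finset.mem_range,
    Nat.lt_succ_iff, poisCdf, ← sum_mul]
  split_ifs <;> ring

lemma stein_indicator_solution_eq (hlam : 0 < lam) {ξ : ℕ} {g : ℕ → ℝ} (hg0 : g 0 = 0)
    (hsteq : ∀ x : ℕ,
      lam * g (x + 1) - (x : ℝ) * g x = (if x = ξ then (1 : ℝ) else 0) - poisPmf lam ξ)
    (x : ℕ) :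
    g (x + 1) = poisPmf lam ξ / lam
      * (((if ξ ≤ x then (1 : ℝ) else 0) - poisCdf lam x) / poisPmf lam x) := by
  have hsol := mul_poisPmf_mul_eq_sum_of_stein hg0 hsteq x
  rw [sum_poisPmf_mul_indicator_sub] at hsol
  field_simp [(poisPmf_pos hlam x).ne']
  linarith

lemma poisPmf_div_mul_one_sub_poisCdf_div_le (hlam : 0 < lam) {ξ x : ℕ} (hξx : ξ ≤ x) :
    poisPmf lam ξ / lam * ((1 - poisCdf lam x) / poisPmf lam x) ≤ (1 - poisCdf lam ξ) / lam :=
  calc poisPmf lam ξ / lam * ((1 - poisCdf lam x) / poisPmf lam x)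
      ≤ poisPmf lam ξ / lam * ((1 - poisCdf lam ξ) / poisPmf lam ξ) :=
        mul_le_mul_of_nonneg_left (antitone_one_sub_poisCdf_div_poisPmf hlam hξx)
          (div_nonneg (poisPmf_pos hlam ξ).le hlam.le)
    _ = (1 - poisCdf lam ξ) / lam := by field_simp [(poisPmf_pos hlam ξ).ne']

lemma poisPmf_succ_div_mul_poisCdf_div_le (hlam : 0 < lam) {x m : ℕ} (hxm : x ≤ m) :
    poisPmf lam (m + 1) / lam * (poisCdf lam x / poisPmf lam x)
      ≤ poisCdf lam m / ((m + 1 : ℕ) : ℝ) :=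
  calc poisPmf lam (m + 1) / lam * (poisCdf lam x / poisPmf lam x)
      ≤ poisPmf lam (m + 1) / lam * (poisCdf lam m / poisPmf lam m) :=
        mul_le_mul_of_nonneg_left (monotone_poisCdf_div_poisPmf hlam hxm)
          (div_nonneg (poisPmf_pos hlam _).le hlam.le)
    _ = poisCdf lam m / ((m + 1 : ℕ) : ℝ) := by
        field_simp [(poisPmf_pos hlam m).ne']
        push_cast
        linear_combination poisCdf lam m * succ_mul_poisPmf_succ lam m

end PoissonStein

open PoissonStein in
/-- Uniform bound on the solution of the Poisson Stein equation for point masses: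
if `g(0) = 0` and `λ g(x+1) - x g(x) = 𝟙[x=ξ] - p(ξ)` for all `x ∈ ℕ`, then
`|g(x)| ≤ max(P(ξ-1)/ξ, (1-P(ξ))/λ)` (with the first term taken as `0` when `ξ = 0`). -/
theorem stmt10 (lam : ℝ) (hlam : 0 < lam) (ξ : ℕ) (g : ℕ → ℝ)
    (hg0 : g 0 = 0)
    (hsteq : ∀ x : ℕ,
      lam * g (x + 1) - (x : ℝ) * g x = (if x = ξ then (1 : ℝ) else 0) - poisPmf lam ξ) :
    ∀ x : ℕ, |g x| ≤
      max (if ξ = 0 then 0 else poisCdf lam (ξ - 1) / (ξ : ℝ)) ((1 - poisCdf lam ξ) / lam) := by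
  rintro (_ | x)
  · rw [hg0, abs_zero]
    exact le_max_of_le_right (div_nonneg (sub_nonneg.mpr (poisCdf_le_one hlam ξ)) hlam.le)
  rw [stein_indicator_solution_eq hlam hg0 hsteq x, abs_mul, abs_div, abs_div,
    abs_of_pos (poisPmf_pos hlam ξ), abs_of_pos hlam, abs_of_pos (poisPmf_pos hlam x)]
  rcases le_or_gt ξ x with hξx | hxξ
  · rw [if_pos hξx, abs_of_nonneg (sub_nonneg.mpr (poisCdf_le_one hlam x))]
    exact le_max_of_le_right (poisPmf_div_mul_one_sub_poisCdf_div_le hlam hξx)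
  · obtain ⟨m, rfl⟩ : ∃ m, ξ = m + 1 := Nat.exists_eq_add_one_of_ne_zero (by omega)
    rw [if_neg (by omega), zero_sub, abs_neg, abs_of_nonneg (poisCdf_nonneg hlam x),
      if_neg (Nat.succ_ne_zero m), Nat.add_sub_cancel]
    exact le_max_of_le_left (poisPmf_succ_div_mul_poisCdf_div_le hlam (by omega))
end

section
/- Let g_ξ solve the Poisson Stein equation λ g(x+1) − x g(x) = 𝟙[x = ξ] − p(ξ) with g(0) = 0. Then sup_{x∈ℕ} |g_ξ(x+1) − g_ξ(x)| = P(ξ−1)/ξ + (1−P(ξ))/λ, and this quantity is at most min( 1/ξ, (1−e^{-λ})/λ ). -/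
open Real MeasureTheory Set

/-!
Multiplying the Stein equation at `x` by `p(x)` and using `x p(x) = λ p(x - 1)` makes
`λ p(x) g(x + 1)` telescope, so `g(x + 1) = p(ξ) (𝟙[ξ ≤ x] - P(x)) / (λ p(x))`. Since `P(x) / p(x)`
increases and `(1 - P(x)) / p(x)` decreases in `x`, `g` decreases from `0` to
`g(ξ) = -P(ξ - 1) / ξ` on `[0, ξ]`, jumps up to `g(ξ + 1) = (1 - P(ξ)) / λ ≥ 0`, and then decreases
while staying nonnegative; so the increment of largest modulus is the jump at `ξ`. Both bounds on
it, like the two monotonicity facts, come termwise from `λ p(j) = (j + 1) p(j + 1)`.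
-/

section Poisson

variable {lam : ℝ}

lemma poisPmf_nonneg (hlam : 0 ≤ lam) (x : ℕ) : 0 ≤ poisPmf lam x := by
  unfold poisPmf; positivity

lemma poisPmf_pos (hlam : 0 < lam) (x : ℕ) : 0 < poisPmf lam x := by
  unfold poisPmf; positivity

lemma poisPmf_zero : poisPmf lam 0 = exp (-lam) := by
  simp [poisPmf]

lemma mul_poisPmf (x : ℕ) : lam * poisPmf lam x = (x + 1) * poisPmf lam (x + 1) := by
  unfold poisPmf
  rw [Nat.factorial_succ]
  push_cast
  field_simp
  ring

lemma hasSum_poisPmf : HasSum (poisPmf lam) 1 := by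
  have h := (NormedSpace.expSeries_div_hasSum_exp lam).mul_left (exp (-lam))
  rw [← exp_eq_exp_ℝ, ← exp_add, neg_add_cancel, exp_zero] at h
  unfold poisPmf
  simpa only [mul_div_assoc] using h

lemma poisCdf_succ (x : ℕ) : poisCdf lam (x + 1) = poisCdf lam x + poisPmf lam (x + 1) :=
  Finset.sum_range_succ _ _

lemma hasSum_poisPmf_tail (x : ℕ) :
    HasSum (fun j ↦ poisPmf lam (j + (x + 1))) (1 - poisCdf lam x) :=
  (hasSum_nat_add_iff' (x + 1)).2 hasSum_poisPmf

lemma poisCdf_nonneg (hlam : 0 ≤ lam) (x : ℕ) : 0 ≤ poisCdf lam x :=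
  Finset.sum_nonneg fun j _ ↦ poisPmf_nonneg hlam j

lemma poisCdf_le_one (hlam : 0 ≤ lam) (x : ℕ) : poisCdf lam x ≤ 1 :=
  sub_nonneg.1 <| (hasSum_poisPmf_tail x).nonneg fun _ ↦ poisPmf_nonneg hlam _

/-- Termwise, `λ p(j) = (j + 1) p(j + 1) ≤ (x + 1) p(j + 1)` for `j ≤ x`. -/
lemma mul_poisCdf_add_le (hlam : 0 ≤ lam) (x : ℕ) :
    lam * poisCdf lam x + (x + 1) * exp (-lam) ≤ (x + 1) * poisCdf lam (x + 1) := by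
  have hshift :
      poisCdf lam (x + 1) = ∑ j ∈ Finset.range (x + 1), poisPmf lam (j + 1) + exp (-lam) := by
    rw [poisCdf, Finset.sum_range_succ', poisPmf_zero]
  rw [hshift, mul_add, add_le_add_iff_right, poisCdf, Finset.mul_sum, Finset.mul_sum]
  refine Finset.sum_le_sum fun j hj ↦ ?_
  rw [mul_poisPmf]
  have hjx : (j : ℝ) ≤ x := by exact_mod_cast Nat.lt_succ_iff.1 (Finset.mem_range.1 hj)
  gcongr
  exact poisPmf_nonneg hlam _

/-- Termwise, `(x + 1) p(j + x + 2) ≤ (j + x + 2) p(j + x + 2) = λ p(j + x + 1)`. -/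
lemma mul_one_sub_poisCdf_succ_le (hlam : 0 ≤ lam) (x : ℕ) :
    (x + 1) * (1 - poisCdf lam (x + 1)) ≤ lam * (1 - poisCdf lam x) := by
  refine hasSum_le (fun j ↦ ?_) ((hasSum_poisPmf_tail (x + 1)).mul_left _)
    ((hasSum_poisPmf_tail x).mul_left lam)
  rw [mul_poisPmf, show j + (x + 1) + 1 = j + (x + 1 + 1) by omega]
  gcongr
  · exact poisPmf_nonneg hlam _
  · linarith [(j.cast_nonneg : (0 : ℝ) ≤ j)]

lemma monotone_poisCdf_div_poisPmf (hlam : 0 < lam) :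
    Monotone fun x ↦ poisCdf lam x / poisPmf lam x := by
  refine monotone_nat_of_le_succ fun x ↦ ?_
  rw [div_le_div_iff₀ (poisPmf_pos hlam x) (poisPmf_pos hlam (x + 1))]
  refine le_of_mul_le_mul_left ?_ hlam
  have h : lam * poisCdf lam x ≤ (x + 1) * poisCdf lam (x + 1) := by
    linarith [mul_poisCdf_add_le hlam.le x, (by positivity : 0 ≤ ((x : ℝ) + 1) * exp (-lam))]
  calc lam * (poisCdf lam x * poisPmf lam (x + 1))
      = (lam * poisCdf lam x) * poisPmf lam (x + 1) := by ring
    _ ≤ ((x + 1) * poisCdf lam (x + 1)) * poisPmf lam (x + 1) :=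
        mul_le_mul_of_nonneg_right h (poisPmf_pos hlam _).le
    _ = lam * (poisCdf lam (x + 1) * poisPmf lam x) := by
        linear_combination (-poisCdf lam (x + 1)) * mul_poisPmf (lam := lam) x

lemma antitone_one_sub_poisCdf_div_poisPmf (hlam : 0 < lam) :
    Antitone fun x ↦ (1 - poisCdf lam x) / poisPmf lam x := by
  refine antitone_nat_of_succ_le fun x ↦ ?_
  rw [div_le_div_iff₀ (poisPmf_pos hlam (x + 1)) (poisPmf_pos hlam x)]
  refine le_of_mul_le_mul_left ?_ hlam
  calc lam * ((1 - poisCdf lam (x + 1)) * poisPmf lam x)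
      = ((x + 1) * (1 - poisCdf lam (x + 1))) * poisPmf lam (x + 1) := by
        linear_combination (1 - poisCdf lam (x + 1)) * mul_poisPmf (lam := lam) x
    _ ≤ (lam * (1 - poisCdf lam x)) * poisPmf lam (x + 1) :=
        mul_le_mul_of_nonneg_right (mul_one_sub_poisCdf_succ_le hlam.le x) (poisPmf_pos hlam _).le
    _ = lam * ((1 - poisCdf lam x) * poisPmf lam (x + 1)) := by ring

end Poisson

noncomputable def poisSteinSol (lam : ℝ) (ξ : ℕ) : ℕ → ℝ
  | 0 => 0
  | x + 1 => poisPmf lam ξ / lam * (((if ξ ≤ x then 1 else 0) - poisCdf lam x) / poisPmf lam x)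

section SteinSolution

variable {lam : ℝ} {ξ : ℕ}

lemma mul_poisPmf_mul_poisSteinSol_succ (hlam : 0 < lam) (x : ℕ) :
    lam * poisPmf lam x * poisSteinSol lam ξ (x + 1) =
      poisPmf lam ξ * ((if ξ ≤ x then 1 else 0) - poisCdf lam x) := by
  have := (poisPmf_pos hlam x).ne'
  rw [poisSteinSol]
  field_simp

lemma poisSteinSol_spec (hlam : 0 < lam) (x : ℕ) :
    lam * poisSteinSol lam ξ (x + 1) - x * poisSteinSol lam ξ x =
      (if x = ξ then 1 else 0) - poisPmf lam ξ := by
  refine mul_left_cancel₀ (poisPmf_pos hlam x).ne' ?_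
  cases x with
  | zero =>
    have h := mul_poisPmf_mul_poisSteinSol_succ (ξ := ξ) hlam 0
    have hP : poisCdf lam 0 = poisPmf lam 0 := by simp [poisCdf]
    rw [hP] at h
    split_ifs at h ⊢ with hξ <;> try omega
    · subst hξ; push_cast; linear_combination h
    · push_cast; linear_combination h
  | succ n =>
    have h1 := mul_poisPmf_mul_poisSteinSol_succ (ξ := ξ) hlam n
    have h2 := mul_poisPmf_mul_poisSteinSol_succ (ξ := ξ) hlam (n + 1)
    have hn := mul_poisPmf (lam := lam) n
    rw [poisCdf_succ] at h2
    push_cast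
    split_ifs at h1 h2 ⊢ with hξ <;> try omega
    · subst hξ; linear_combination h2 - h1 + poisSteinSol lam (n + 1) (n + 1) * hn
    all_goals linear_combination h2 - h1 + poisSteinSol lam ξ (n + 1) * hn

lemma eq_poisSteinSol (hlam : 0 < lam) {g : ℕ → ℝ} (hg0 : g 0 = 0)
    (hsteq : ∀ x : ℕ,
      lam * g (x + 1) - (x : ℝ) * g x = (if x = ξ then (1 : ℝ) else 0) - poisPmf lam ξ) :
    g = poisSteinSol lam ξ := by
  funext x
  induction x with
  | zero => exact hg0
  | succ n ih =>
    refine mul_left_cancel₀ hlam.ne' ?_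
    linear_combination hsteq n - poisSteinSol_spec hlam n + n * ih

lemma poisSteinSol_succ_of_lt {x : ℕ} (hx : x < ξ) :
    poisSteinSol lam ξ (x + 1) = -(poisPmf lam ξ / lam) * (poisCdf lam x / poisPmf lam x) := by
  rw [poisSteinSol, if_neg (not_le.2 hx)]
  ring

lemma poisSteinSol_succ_of_le {x : ℕ} (hx : ξ ≤ x) :
    poisSteinSol lam ξ (x + 1) = poisPmf lam ξ / lam * ((1 - poisCdf lam x) / poisPmf lam x) := by
  rw [poisSteinSol, if_pos hx]

lemma poisSteinSol_mem_Icc_of_le (hlam : 0 < lam) {y : ℕ} (hy : y ≤ ξ) :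
    poisSteinSol lam ξ y ∈ Icc (poisSteinSol lam ξ ξ) 0 := by
  have hc : 0 ≤ poisPmf lam ξ / lam := div_nonneg (poisPmf_nonneg hlam.le ξ) hlam.le
  have hneg : ∀ x, -(poisPmf lam ξ / lam) * (poisCdf lam x / poisPmf lam x) ≤ 0 :=
    fun x ↦ mul_nonpos_of_nonpos_of_nonneg (neg_nonpos.2 hc)
      (div_nonneg (poisCdf_nonneg hlam.le x) (poisPmf_nonneg hlam.le x))
  cases ξ with
  | zero => obtain rfl := Nat.le_zero.1 hy; exact ⟨le_rfl, le_rfl⟩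
  | succ m =>
    rw [poisSteinSol_succ_of_lt m.lt_succ_self]
    cases y with
    | zero => exact ⟨hneg m, le_rfl⟩
    | succ k =>
      rw [poisSteinSol_succ_of_lt hy]
      refine ⟨?_, hneg k⟩
      rw [neg_mul, neg_mul, neg_le_neg_iff]
      exact mul_le_mul_of_nonneg_left (monotone_poisCdf_div_poisPmf hlam (by omega)) hc

lemma poisSteinSol_mem_Icc_of_lt (hlam : 0 < lam) {y : ℕ} (hy : ξ < y) :
    poisSteinSol lam ξ y ∈ Icc 0 (poisSteinSol lam ξ (ξ + 1)) := by
  have hc : 0 ≤ poisPmf lam ξ / lam := div_nonneg (poisPmf_nonneg hlam.le ξ) hlam.le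
  obtain ⟨k, rfl⟩ : ∃ k, y = k + 1 := ⟨y - 1, by omega⟩
  rw [poisSteinSol_succ_of_le (x := k) (by omega), poisSteinSol_succ_of_le le_rfl]
  refine ⟨mul_nonneg hc (div_nonneg ?_ (poisPmf_nonneg hlam.le k)), ?_⟩
  · exact sub_nonneg.2 (poisCdf_le_one hlam.le k)
  · exact mul_le_mul_of_nonneg_left (antitone_one_sub_poisCdf_div_poisPmf hlam (by omega)) hc

lemma abs_poisSteinSol_sub_le (hlam : 0 < lam) (x : ℕ) :
    |poisSteinSol lam ξ (x + 1) - poisSteinSol lam ξ x| ≤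
      poisSteinSol lam ξ (ξ + 1) - poisSteinSol lam ξ ξ := by
  have hξ := (poisSteinSol_mem_Icc_of_le hlam (le_refl ξ)).2
  have hξ1 := (poisSteinSol_mem_Icc_of_lt hlam ξ.lt_succ_self).1
  rw [abs_sub_le_iff]
  rcases lt_trichotomy x ξ with hx | rfl | hx
  · have h := poisSteinSol_mem_Icc_of_le hlam hx.le
    have h1 := poisSteinSol_mem_Icc_of_le hlam hx
    constructor <;> linarith [h.1, h.2, h1.1, h1.2]
  · constructor <;> linarith
  · have h := poisSteinSol_mem_Icc_of_lt hlam hx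
    have h1 := poisSteinSol_mem_Icc_of_lt hlam (hx.trans x.lt_succ_self)
    constructor <;> linarith [h.1, h.2, h1.1, h1.2]

lemma iSup_abs_poisSteinSol_sub (hlam : 0 < lam) :
    ⨆ x : ℕ, |poisSteinSol lam ξ (x + 1) - poisSteinSol lam ξ x| =
      poisSteinSol lam ξ (ξ + 1) - poisSteinSol lam ξ ξ := by
  refine ciSup_eq_of_forall_le_of_forall_lt_exists_gt (abs_poisSteinSol_sub_le hlam)
    fun w hw ↦ ⟨ξ, hw.trans_le (le_abs_self _)⟩

lemma poisSteinSol_self (hlam : 0 < lam) (n : ℕ) :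
    poisSteinSol lam (n + 1) (n + 1) = -(poisCdf lam n / (n + 1)) := by
  have hpmf := mul_poisPmf (lam := lam) n
  have := (poisPmf_pos hlam n).ne'
  rw [poisSteinSol_succ_of_lt n.lt_succ_self]
  field_simp
  linear_combination poisCdf lam n * hpmf

lemma poisSteinSol_succ_self (hlam : 0 < lam) :
    poisSteinSol lam ξ (ξ + 1) = (1 - poisCdf lam ξ) / lam := by
  have := (poisPmf_pos hlam ξ).ne'
  rw [poisSteinSol_succ_of_le le_rfl]
  field_simp

end SteinSolution

lemma poisCdf_div_add_one_sub_poisCdf_div_le_min {lam : ℝ} (hlam : 0 < lam) (n : ℕ) :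
    poisCdf lam n / (n + 1) + (1 - poisCdf lam (n + 1)) / lam ≤
      min (1 / ((n : ℝ) + 1)) ((1 - exp (-lam)) / lam) := by
  have hn : (0 : ℝ) < n + 1 := by positivity
  apply le_min
  · have htail : (1 - poisCdf lam (n + 1)) / lam ≤ (1 - poisCdf lam n) / (n + 1) := by
      rw [div_le_div_iff₀ hlam hn]
      linarith [mul_one_sub_poisCdf_succ_le hlam.le n]
    calc _ ≤ poisCdf lam n / (n + 1) + (1 - poisCdf lam n) / (n + 1) := by gcongr
      _ = 1 / (n + 1) := by rw [← add_div, add_sub_cancel]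
  · have hcdf : poisCdf lam n / (n + 1) ≤ (poisCdf lam (n + 1) - exp (-lam)) / lam := by
      rw [div_le_div_iff₀ hn hlam]
      linarith [mul_poisCdf_add_le hlam.le n]
    calc _ ≤ (poisCdf lam (n + 1) - exp (-lam)) / lam + (1 - poisCdf lam (n + 1)) / lam := by
          gcongr
      _ = (1 - exp (-lam)) / lam := by rw [← add_div]; ring

/-- For the solution of the Poisson Stein equation for the point mass at `ξ ≥ 1`:
`sup_x |g(x+1) - g(x)| = P(ξ-1)/ξ + (1-P(ξ))/λ ≤ min(1/ξ, (1-e^{-λ})/λ)`. -/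
theorem stmt11 (lam : ℝ) (hlam : 0 < lam) (ξ : ℕ) (hξ : 1 ≤ ξ) (g : ℕ → ℝ)
    (hg0 : g 0 = 0)
    (hsteq : ∀ x : ℕ,
      lam * g (x + 1) - (x : ℝ) * g x = (if x = ξ then (1 : ℝ) else 0) - poisPmf lam ξ) :
    (⨆ x : ℕ, |g (x + 1) - g x|) = poisCdf lam (ξ - 1) / (ξ : ℝ) + (1 - poisCdf lam ξ) / lam ∧
    poisCdf lam (ξ - 1) / (ξ : ℝ) + (1 - poisCdf lam ξ) / lam ≤
      min (1 / (ξ : ℝ)) ((1 - Real.exp (-lam)) / lam) := by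
  obtain rfl := eq_poisSteinSol hlam hg0 hsteq
  obtain ⟨n, rfl⟩ : ∃ n, ξ = n + 1 := ⟨ξ - 1, by omega⟩
  rw [Nat.add_sub_cancel, Nat.cast_succ]
  refine ⟨?_, poisCdf_div_add_one_sub_poisCdf_div_le_min hlam n⟩
  rw [iSup_abs_poisSteinSol_sub hlam, poisSteinSol_succ_self hlam, poisSteinSol_self hlam]
  ring
end

section
/- Let X have a density p w.r.t. Lebesgue measure with support an interval, cdf P, and let h ∈ L¹(p). Then for every x in the support, (1/p(x)) ∫_{-∞}^{x} (h(u) − E[h(X)]) p(u) du = −(1/p(x)) ∫_{x}^{∞} (h(u) − E[h(X)]) p(u) du, and if h is absolutely continuous this common value equals − E[ K(x, X) h'(X) ] where K(x,y) = P(x∧y)(1−P(x∨y))/(p(x)p(y)). -/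
/-!
Splitting `∫ (h - E h) p = 0` at `x` gives the first identity. For the second, write `P` for the
cdf and `Q = 1 - P`: the integrand `P(x ∧ y) Q(x ∨ y) h'(y)` is `Q(x) P(y) h'(y)` left of `x` and
`P(x) Q(y) h'(y)` right of `x`. By Fubini, `∫_{y ≤ x} P(y) h'(y) dy = ∫_{u ≤ x} (h x - h u) p(u) du`,
and the mirror image holds on the right; the two pieces combine to `-∫_{u ≤ x} (h - E h) p`.
Where `p y = 0` the interval support forces `P(x ∧ y) Q(x ∨ y) = 0`, so the division by `p y` in the
kernel loses nothing.
-/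

open MeasureTheory Set

theorem mul_setIntegral_eq_mul_of_integrableOn {α : Type*} [MeasurableSpace α] {μ : Measure α}
    {f : α → ℝ} {s : Set α} {c a : ℝ} (hcf : IntegrableOn (fun y => c * f y) s μ)
    (hf : IntegrableOn f s μ → ∫ y in s, f y ∂μ = a) :
    c * ∫ y in s, f y ∂μ = c * a := by
  rcases eq_or_ne c 0 with rfl | hc
  · simp
  · rw [hf ((integrable_const_mul_iff hc.isUnit f).1 hcf)]

theorem integral_sub_const_mul {α : Type*} [MeasurableSpace α] {μ : Measure α} {h p : α → ℝ}
    (hhp : Integrable (fun u => h u * p u) μ) (hp : Integrable p μ) (c : ℝ) :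
    ∫ u, (h u - c) * p u ∂μ = (∫ u, h u * p u ∂μ) - c * ∫ u, p u ∂μ := by
  simp only [sub_mul]
  rw [integral_sub hhp (hp.const_mul c), integral_const_mul]

theorem integral_Icc_eq_sub_of_hasDerivAt {h h' : ℝ → ℝ} (hh' : ∀ y, HasDerivAt h (h' y) y)
    {a b : ℝ} (hab : a ≤ b) (hint : IntegrableOn h' (Icc a b)) :
    ∫ y in Icc a b, h' y = h b - h a := by
  rw [integral_Icc_eq_integral_Ioc, ← intervalIntegral.integral_of_le hab,
    intervalIntegral.integral_eq_sub_of_hasDerivAt (fun t _ => hh' t)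
      ((intervalIntegrable_iff_integrableOn_Icc_of_le hab).2 hint)]

theorem integral_Iic_integral_Iic_mul_deriv {p h h' : ℝ → ℝ} (hp : Integrable p)
    (hnn : ∀ u, 0 ≤ p u) (hh' : ∀ y, HasDerivAt h (h' y) y) (x : ℝ)
    (hint : IntegrableOn (fun y => (∫ u in Iic y, p u) * h' y) (Iic x)) :
    ∫ y in Iic x, (∫ u in Iic y, p u) * h' y = ∫ u in Iic x, (h x - h u) * p u := by
  have h'meas : Measurable h' := (funext fun y => (hh' y).deriv) ▸ measurable_deriv h
  set F : ℝ → ℝ → ℝ := fun y u => (Iic x).indicator h' y * (Iic y).indicator p u with hF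
  have hF_swap : ∀ y u, F y u = (Icc u x).indicator h' y * p u := by
    intro y u
    simp only [hF, indicator, mem_Iic, mem_Icc]
    split_ifs <;> simp_all
  have hF_int_right : ∀ y, ∫ u, F y u = (Iic x).indicator h' y * ∫ u in Iic y, p u := by
    intro y
    rw [integral_const_mul, integral_indicator measurableSet_Iic]
  have hF_meas : AEStronglyMeasurable (Function.uncurry F) (volume.prod volume) :=
    ((h'meas.indicator measurableSet_Iic).comp measurable_fst).aestronglyMeasurable.mul
      (hp.1.comp_snd.indicator (measurableSet_le measurable_snd measurable_fst))
  have hF_int : Integrable (Function.uncurry F) (volume.prod volume) := by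
    refine (integrable_prod_iff hF_meas).2 ⟨ae_of_all _ fun y =>
      (hp.indicator measurableSet_Iic).const_mul ((Iic x).indicator h' y), ?_⟩
    refine ((integrable_indicator_iff measurableSet_Iic).2 hint).norm.congr (ae_of_all _ fun y => ?_)
    have hnorm : ∀ u, ‖F y u‖ = ‖(Iic x).indicator h' y‖ * (Iic y).indicator p u := fun u => by
      rw [norm_mul, Real.norm_of_nonneg (indicator_nonneg (fun u _ => hnn u) u)]
    simp only [Function.uncurry_apply_pair, hnorm, integral_const_mul,
      integral_indicator measurableSet_Iic, indicator_mul_right, norm_mul,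
      Real.norm_of_nonneg (setIntegral_nonneg measurableSet_Iic fun u _ => hnn u)]
    ring
  have hF_int_left : ∀ᵐ u, ∫ y, F y u = (Iic x).indicator (fun u => (h x - h u) * p u) u := by
    filter_upwards [hF_int.prod_left_ae] with u hu
    simp only [Function.uncurry_apply_pair, hF_swap] at hu ⊢
    rw [integral_mul_const, integral_indicator measurableSet_Icc]
    -- `h'` need not be integrable on `[u, x]` when `p u = 0`, but then both sides vanish
    rcases eq_or_ne (p u) 0 with hpu | hpu
    · simp [indicator_mul_left, hpu]
    rcases le_or_gt u x with hux | hxu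
    · rw [indicator_of_mem (mem_Iic.2 hux), integral_Icc_eq_sub_of_hasDerivAt hh' hux
        ((integrable_indicator_iff measurableSet_Icc).1 ((integrable_mul_const_iff hpu.isUnit _).1 hu))]
    · rw [Icc_eq_empty (not_le.2 hxu), indicator_of_notMem (notMem_Iic.2 hxu)]
      simp
  calc ∫ y in Iic x, (∫ u in Iic y, p u) * h' y
      = ∫ y, ∫ u, F y u := by
        rw [← integral_indicator measurableSet_Iic]
        congr 1 with y
        rw [hF_int_right, indicator_mul_right, mul_comm]
    _ = ∫ u, ∫ y, F y u := integral_integral_swap hF_int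
    _ = ∫ u in Iic x, (h x - h u) * p u := by
        rw [integral_congr_ae hF_int_left, integral_indicator measurableSet_Iic]

theorem integral_Ioi_integral_Ioi_mul_deriv {p h h' : ℝ → ℝ} (hp : Integrable p)
    (hnn : ∀ u, 0 ≤ p u) (hh' : ∀ y, HasDerivAt h (h' y) y) (x : ℝ)
    (hint : IntegrableOn (fun y => (∫ u in Ioi y, p u) * h' y) (Ioi x)) :
    ∫ y in Ioi x, (∫ u in Ioi y, p u) * h' y = ∫ u in Ioi x, (h u - h x) * p u := by
  have hreflected := integral_Iic_integral_Iic_mul_deriv (p := fun u => p (-u))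
    (h := fun u => h (-u)) (h' := fun y => -h' (-y)) hp.comp_neg (fun u => hnn (-u))
    (fun y => by simpa [Function.comp_def] using (hh' (-y)).comp y (hasDerivAt_neg y)) (-x) ?_
  · simp only [integral_comp_neg_Iic, neg_neg] at hreflected
    rw [integral_comp_neg_Iic (-x) (fun y => (∫ u in Ioi y, p u) * -h' y),
      integral_comp_neg_Iic (-x) (fun u => (h x - h u) * p u), neg_neg] at hreflected
    have hflip : ∫ u in Ioi x, (h u - h x) * p u = -∫ u in Ioi x, (h x - h u) * p u := by
      rw [← integral_neg]
      congr 1 with u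
      ring
    simp only [mul_neg, integral_neg] at hreflected
    linarith
  · have hint' : IntegrableOn (fun y => (∫ u in Ioi y, p u) * -h' y) (Ici (-(-x))) := by
      rw [neg_neg, integrableOn_Ici_iff_integrableOn_Ioi]
      exact hint.fun_neg.congr_fun (fun y _ => (mul_neg _ _).symm) measurableSet_Ioi
    simpa only [integral_comp_neg_Iic] using hint'.comp_neg_Iic

theorem integral_Iic_mul_integral_Ioi_eq_zero {p : ℝ → ℝ} (hsupp : Convex ℝ (Function.support p))
    {a y b : ℝ} (hy : p y = 0) (hay : a ≤ y) (hyb : y ≤ b) :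
    (∫ u in Iic a, p u) * (∫ u in Ioi b, p u) = 0 := by
  by_cases hleft : ∀ t ≤ y, p t = 0
  · rw [setIntegral_eq_zero_of_forall_eq_zero fun t ht => hleft t ((mem_Iic.1 ht).trans hay),
      zero_mul]
  push Not at hleft
  obtain ⟨s, hsy, hs⟩ := hleft
  have hright : ∀ t ≥ y, p t = 0 := fun t hyt =>
    by_contra fun ht => hsupp.ordConnected.out hs ht ⟨hsy, hyt⟩ hy
  rw [setIntegral_eq_zero_of_forall_eq_zero fun t ht => hright t (hyb.trans (mem_Ioi.1 ht).le),
    mul_zero]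

theorem one_sub_integral_Iic_eq_integral_Ioi {p : ℝ → ℝ} (hp : Integrable p)
    (hmass : ∫ u, p u = 1) (t : ℝ) :
    1 - ∫ u in Iic t, p u = ∫ u in Ioi t, p u := by
  rw [← hmass, ← intervalIntegral.integral_Iic_add_Ioi hp.integrableOn hp.integrableOn,
    add_sub_cancel_left]

theorem integral_cdf_min_mul_ccdf_max_mul_deriv {p h h' : ℝ → ℝ} (hp : Integrable p)
    (hnn : ∀ u, 0 ≤ p u) (hmass : ∫ u, p u = 1) (hh' : ∀ y, HasDerivAt h (h' y) y)
    (hhp : Integrable (fun u => h u * p u)) (x : ℝ)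
    (hG : Integrable (fun y =>
      (∫ u in Iic (min x y), p u) * (1 - ∫ u in Iic (max x y), p u) * h' y)) :
    ∫ y, (∫ u in Iic (min x y), p u) * (1 - ∫ u in Iic (max x y), p u) * h' y
      = -∫ u in Iic x, (h u - ∫ v, h v * p v) * p u := by
  have hccdf := one_sub_integral_Iic_eq_integral_Ioi hp hmass
  have hleft : ∀ y ∈ Iic x, (∫ u in Iic (min x y), p u) * (1 - ∫ u in Iic (max x y), p u) * h' y
      = (∫ u in Ioi x, p u) * ((∫ u in Iic y, p u) * h' y) := fun y hy => by
    rw [min_eq_right hy, max_eq_left hy, hccdf]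
    ring
  have hright : ∀ y ∈ Ioi x, (∫ u in Iic (min x y), p u) * (1 - ∫ u in Iic (max x y), p u) * h' y
      = (∫ u in Iic x, p u) * ((∫ u in Ioi y, p u) * h' y) := fun y hy => by
    rw [min_eq_left (le_of_lt hy), max_eq_right (le_of_lt hy), hccdf]
    ring
  -- `Q x` or `P x` may vanish, and then `P h'` resp. `Q h'` need not be integrable on that side
  have hIic := mul_setIntegral_eq_mul_of_integrableOn
    (hG.integrableOn.congr_fun hleft measurableSet_Iic)
    (integral_Iic_integral_Iic_mul_deriv hp hnn hh' x)
  have hIoi := mul_setIntegral_eq_mul_of_integrableOn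
    (hG.integrableOn.congr_fun hright measurableSet_Ioi)
    (integral_Ioi_integral_Ioi_mul_deriv hp hnn hh' x)
  have hsplit := fun s c => integral_sub_const_mul (hhp.integrableOn (s := s)) hp.integrableOn c
  have hflip : ∫ u in Iic x, (h x - h u) * p u = -∫ u in Iic x, (h u - h x) * p u := by
    rw [← integral_neg]
    congr 1 with u
    ring
  have hmean : (∫ u in Iic x, h u * p u) + ∫ u in Ioi x, h u * p u = ∫ v, h v * p v :=
    intervalIntegral.integral_Iic_add_Ioi (b := x) hhp.integrableOn hhp.integrableOn
  rw [← intervalIntegral.integral_Iic_add_Ioi hG.integrableOn hG.integrableOn,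
    setIntegral_congr_fun measurableSet_Iic hleft, setIntegral_congr_fun measurableSet_Ioi hright,
    integral_const_mul, integral_const_mul, hIic, hIoi, hflip, hsplit (Iic x) (h x),
    hsplit (Ioi x) (h x), hsplit (Iic x), ← hccdf x, ← hmean]
  ring

theorem cdf_min_mul_ccdf_max_div_mul_cancel {p : ℝ → ℝ} (hp : Integrable p)
    (hmass : ∫ u, p u = 1) (hsupp : Convex ℝ (Function.support p)) (c : ℝ) {x : ℝ}
    (hx : p x ≠ 0) (y : ℝ) :
    (∫ u in Iic (min x y), p u) * (1 - ∫ u in Iic (max x y), p u) / (p x * p y) * c * p y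
      = (∫ u in Iic (min x y), p u) * (1 - ∫ u in Iic (max x y), p u) * c / p x := by
  rcases eq_or_ne (p y) 0 with hy | hy
  · rw [one_sub_integral_Iic_eq_integral_Ioi hp hmass,
      integral_Iic_mul_integral_Ioi_eq_zero hsupp hy (min_le_right x y) (le_max_right x y), hy]
    simp
  · field_simp

theorem stmt12_general (p : ℝ → ℝ) (hnn : ∀ x, 0 ≤ p x)
    (hsupp : Convex ℝ (Function.support p))
    (hmass : ∫ x, p x = 1)
    (h h' : ℝ → ℝ)
    (hh' : ∀ y, HasDerivAt h (h' y) y)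
    (hL1 : Integrable (fun u => h u * p u))
    (hI2 : ∀ x, Integrable (fun y =>
      ((∫ u in Set.Iic (min x y), p u) * (1 - ∫ u in Set.Iic (max x y), p u) /
        (p x * p y)) * h' y * p y)) :
    ∀ x : ℝ, 0 < p x →
      ((p x)⁻¹ * ∫ u in Set.Iic x, (h u - ∫ v, h v * p v) * p u
        = -((p x)⁻¹ * ∫ u in Set.Ioi x, (h u - ∫ v, h v * p v) * p u)) ∧
      ((p x)⁻¹ * ∫ u in Set.Iic x, (h u - ∫ v, h v * p v) * p u
        = -∫ y, ((∫ u in Set.Iic (min x y), p u) * (1 - ∫ u in Set.Iic (max x y), p u) /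
            (p x * p y)) * h' y * p y) := by
  intro x hx
  have hp : Integrable p := integrable_of_integral_eq_one hmass
  have hcentered : Integrable (fun u => (h u - ∫ v, h v * p v) * p u) := by
    simp only [sub_mul]
    exact hL1.sub (hp.const_mul _)
  have hmean_zero : ∫ u, (h u - ∫ v, h v * p v) * p u = 0 := by
    rw [integral_sub_const_mul hL1 hp, hmass, mul_one, sub_self]
  have hsplit : (∫ u in Iic x, (h u - ∫ v, h v * p v) * p u)
      + ∫ u in Ioi x, (h u - ∫ v, h v * p v) * p u = 0 :=
    (intervalIntegral.integral_Iic_add_Ioi hcentered.integrableOn hcentered.integrableOn).trans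
      hmean_zero
  have hkernel := fun y => cdf_min_mul_ccdf_max_div_mul_cancel hp hmass hsupp (h' y) hx.ne' y
  have hG : Integrable fun y =>
      (∫ u in Iic (min x y), p u) * (1 - ∫ u in Iic (max x y), p u) * h' y := by
    refine ((hI2 x).const_mul (p x)).congr (ae_of_all _ fun y => ?_)
    dsimp only
    rw [hkernel]
    field_simp
  refine ⟨by linear_combination (p x)⁻¹ * hsplit, ?_⟩
  rw [integral_congr_ae (ae_of_all _ hkernel), integral_div,
    integral_cdf_min_mul_ccdf_max_mul_deriv hp hnn hmass hh' hL1 x hG]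
  field_simp

/-- Representation formulae for the canonical pseudo-inverse Stein operator of a
continuous density `p` with interval support: for `x` in the support,
`(1/p(x)) ∫_{-∞}^x (h - E[h]) p = -(1/p(x)) ∫_x^∞ (h - E[h]) p`, and for absolutely
continuous `h` this equals `-E[K(x,X) h'(X)]` with
`K(x,y) = P(x∧y)(1-P(x∨y))/(p(x)p(y))`. -/
theorem stmt12 (p : ℝ → ℝ) (hmeas : Measurable p) (hnn : ∀ x, 0 ≤ p x)
    (hsupp : Convex ℝ (Function.support p))
    (hmass : ∫ x, p x = 1)
    (h h' : ℝ → ℝ)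
    (hh' : ∀ y, HasDerivAt h (h' y) y)
    (hL1 : Integrable (fun u => h u * p u))
    (hI1 : Integrable (fun u => (h u - ∫ v, h v * p v) * p u))
    (hI2 : ∀ x, Integrable (fun y =>
      ((∫ u in Set.Iic (min x y), p u) * (1 - ∫ u in Set.Iic (max x y), p u) /
        (p x * p y)) * h' y * p y)) :
    ∀ x : ℝ, 0 < p x →
      ((p x)⁻¹ * ∫ u in Set.Iic x, (h u - ∫ v, h v * p v) * p u
        = -((p x)⁻¹ * ∫ u in Set.Ioi x, (h u - ∫ v, h v * p v) * p u)) ∧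
      ((p x)⁻¹ * ∫ u in Set.Iic x, (h u - ∫ v, h v * p v) * p u
        = -∫ y, ((∫ u in Set.Iic (min x y), p u) * (1 - ∫ u in Set.Iic (max x y), p u) /
            (p x * p y)) * h' y * p y) :=
  stmt12_general p hnn hsupp hmass h h' hh' hL1 hI2
end

section
/- Let X have continuous density p with cdf P, and define R(x,y) = (P(y) − 𝟙[x ≤ y])/p(y). Then for every absolutely continuous h ∈ L¹(p) with h' integrable, h(x) − E[h(X)] = E[ R(x, X) h'(X) ] for all x in the support of p. -/
open Real MeasureTheory Set

/-- Representation of centered test functions: with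
`R(x,y) = (P(y) - 𝟙[x ≤ y])/p(y)`, for every absolutely continuous `h ∈ L¹(p)`,
`h(x) - E[h(X)] = E[R(x,X) h'(X)]` for all `x` in the support of `p`. -/
theorem stmt13 (p : ℝ → ℝ) (hmeas : Measurable p) (hnn : ∀ x, 0 ≤ p x)
    (hsupp : Convex ℝ (Function.support p))
    (hmass : ∫ x, p x = 1)
    (h h' : ℝ → ℝ)
    (hh' : ∀ y, HasDerivAt h (h' y) y)
    (hL1 : Integrable (fun u => h u * p u))
    (hI : ∀ x, Integrable (fun y =>
      (((∫ u in Set.Iic y, p u) - if x ≤ y then (1 : ℝ) else 0) / p y) * h' y * p y)) :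
    ∀ x ∈ Function.support p,
      h x - ∫ v, h v * p v =
        ∫ y, (((∫ u in Set.Iic y, p u) - if x ≤ y then (1 : ℝ) else 0) / p y) * h' y * p y := by
  intro x hx
  have hpx : p x ≠ 0 := hx
  set P : ℝ → ℝ := fun y => ∫ u in Set.Iic y, p u with hPdef
  have hp_int : Integrable p := by
    by_contra hc
    rw [integral_undef hc] at hmass; norm_num at hmass
  have hm' : Measurable h' := by
    have : h' = deriv h := funext fun y => ((hh' y).deriv).symm
    rw [this]; exact measurable_deriv h
  -- basic facts about P
  have hP0 : ∀ y, 0 ≤ P y := fun y =>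
    setIntegral_nonneg measurableSet_Iic (fun u _ => hnn u)
  have hP1 : ∀ y, P y ≤ 1 :=
    fun y => le_of_le_of_eq (setIntegral_le_integral hp_int (Filter.Eventually.of_forall hnn)) hmass
  have hPmono : ∀ a b : ℝ, a ≤ b → P a ≤ P b := by
    intro a b hab
    exact setIntegral_mono_set hp_int.integrableOn
      (Filter.Eventually.of_forall hnn) (HasSubset.Subset.eventuallyLE (Iic_subset_Iic.mpr hab))
  have hPiio : ∀ y, ∫ v in Set.Iio y, p v = P y := fun y =>
    setIntegral_congr_set Iio_ae_eq_Iic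
  have hPici : ∀ y, ∫ v in Set.Ici y, p v = 1 - P y := by
    intro y
    have h1 := integral_add_compl (s := Set.Iic y) (f := p) measurableSet_Iic hp_int
    rw [Set.compl_Iic] at h1
    have h2 : ∫ v in Set.Ici y, p v = ∫ v in Set.Ioi y, p v :=
      (setIntegral_congr_set Ioi_ae_eq_Ici).symm
    rw [h2]; rw [hmass] at h1; linarith [h1]
  -- vanishing off the support
  have key : ∀ y, p y = 0 → (P y - if x ≤ y then (1:ℝ) else 0) = 0 := by
    intro y hpy
    have hyx : y ≠ x := fun he => hpx (he ▸ hpy)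
    rcases lt_or_gt_of_ne hyx with hlt | hgt
    · have hzero : ∀ u ∈ Set.Iic y, p u = 0 := by
        intro u hu
        by_contra hu0
        have hy : y ∈ Function.support p := by
          have hseg := hsupp.segment_subset hu0 hx
          rw [segment_eq_Icc (le_trans hu (le_of_lt hlt))] at hseg
          exact hseg ⟨hu, le_of_lt hlt⟩
        exact hy hpy
      have : P y = 0 := by
        calc P y = ∫ u in Set.Iic y, (0:ℝ) :=
              setIntegral_congr_fun measurableSet_Iic hzero
          _ = 0 := integral_zero _ _
      rw [this, if_neg (not_le.mpr hlt)]; ring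
    · have hzero : ∀ u ∈ Set.Ici y, p u = 0 := by
        intro u hu
        by_contra hu0
        have hy : y ∈ Function.support p := by
          have hseg := hsupp.segment_subset hx hu0
          rw [segment_eq_Icc (le_trans (le_of_lt hgt) hu)] at hseg
          exact hseg ⟨le_of_lt hgt, hu⟩
        exact hy hpy
      have : P y = 1 := by
        have h0 : ∫ v in Set.Ici y, p v = 0 := by
          calc (∫ v in Set.Ici y, p v) = ∫ v in Set.Ici y, (0:ℝ) :=
                setIntegral_congr_fun measurableSet_Ici hzero
            _ = 0 := integral_zero _ _
        rw [hPici y] at h0; linarith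
      rw [this, if_pos (le_of_lt hgt)]; ring
  -- the simplified integrand g
  set g : ℝ → ℝ := fun y => (P y - if x ≤ y then (1:ℝ) else 0) * h' y with hgdef
  have hgeq : ∀ y, ((P y - if x ≤ y then (1:ℝ) else 0) / p y) * h' y * p y = g y := by
    intro y
    by_cases hpy : p y = 0
    · simp [hgdef, hpy, key y hpy]
    · simp only [hgdef]; field_simp
  have hg_int : Integrable g := (hI x).congr (Filter.Eventually.of_forall hgeq)
  have hgoal_rw : (∫ y, ((P y - if x ≤ y then (1:ℝ) else 0) / p y) * h' y * p y) = ∫ y, g y :=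
    integral_congr_ae (Filter.Eventually.of_forall hgeq)
  rw [hgoal_rw]
  -- the kernel k and the Fubini function f
  set k : ℝ → ℝ → ℝ := fun v y =>
    (if v < y ∧ y ≤ x then (1:ℝ) else 0) - (if x < y ∧ y ≤ v then (1:ℝ) else 0) with hkdef
  set f : ℝ → ℝ → ℝ := fun v y => p v * (h' y * k v y) with hfdef
  have hne : ∀ᵐ y : ℝ, y ≠ x := by
    refine ae_iff.mpr ?_
    simp only [not_not]
    simpa using measure_singleton (x : ℝ)
  -- joint measurability
  have hFmeas : Measurable (Function.uncurry f) := by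
    apply (hmeas.comp measurable_fst).mul
    apply (hm'.comp measurable_snd).mul
    apply Measurable.sub
    · exact Measurable.ite
        ((measurableSet_lt measurable_fst measurable_snd).inter (measurable_snd measurableSet_Iic))
        measurable_const measurable_const
    · exact Measurable.ite
        (((measurableSet_lt measurable_const measurable_snd)).inter
          (measurableSet_le measurable_snd measurable_fst))
        measurable_const measurable_const
  -- sections in v are integrable
  have hsec : ∀ y : ℝ, Integrable (fun v => f v y) := by
    intro y
    have hkm : Measurable fun v => k v y := by
      apply Measurable.sub
      · exact Measurable.ite
          ((measurableSet_Iio).inter (MeasurableSet.const _)) measurable_const measurable_const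
      · exact Measurable.ite
          ((MeasurableSet.const _).inter measurableSet_Ici) measurable_const measurable_const
    refine Integrable.mono' (hp_int.const_mul |h' y|)
      ((hmeas.mul ((measurable_const (a := h' y)).mul hkm)).aestronglyMeasurable) ?_
    refine Filter.Eventually.of_forall fun v => ?_
    have hk1 : |k v y| ≤ 1 := by
      simp only [hkdef]
      split <;> split <;> norm_num
    have : ‖f v y‖ = p v * (|h' y| * |k v y|) := by
      rw [hfdef]; dsimp only
      rw [Real.norm_eq_abs, abs_mul, abs_mul, abs_of_nonneg (hnn v)]
    rw [this]
    calc p v * (|h' y| * |k v y|) ≤ p v * (|h' y| * 1) := by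
          apply mul_le_mul_of_nonneg_left _ (hnn v)
          exact mul_le_mul_of_nonneg_left hk1 (abs_nonneg _)
      _ = |h' y| * p v := by ring
  -- the norm integral in v, computed
  have hnorm : ∀ y : ℝ, (∫ v, ‖f v y‖) =
      |h' y| * ((if y ≤ x then P y else 0) + (if x < y then 1 - P y else 0)) := by
    intro y
    rcases le_or_gt y x with hyx | hxy
    · have : (fun v => ‖f v y‖) = fun v => |h' y| * (Set.Iio y).indicator p v := by
        funext v
        have hnb : ¬(x < y ∧ y ≤ v) := fun hc => absurd hyx (not_le.mpr hc.1)
        simp only [hfdef, hkdef]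
        rw [if_neg hnb, sub_zero, Set.indicator_apply]
        by_cases hv : v < y
        · rw [if_pos (show v < y ∧ y ≤ x from ⟨hv, hyx⟩), if_pos (Set.mem_Iio.mpr hv)]
          rw [Real.norm_eq_abs, abs_mul, abs_mul, abs_of_nonneg (hnn v)]
          simp [abs_of_nonneg]; ring
        · rw [if_neg (show ¬(v < y ∧ y ≤ x) from fun hc => hv hc.1),
            if_neg (show v ∉ Set.Iio y by simpa using hv)]
          simp
      rw [this, integral_const_mul, integral_indicator measurableSet_Iio, hPiio y,
        if_pos hyx, if_neg (not_lt.mpr hyx), add_zero]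
    · have : (fun v => ‖f v y‖) = fun v => |h' y| * (Set.Ici y).indicator p v := by
        funext v
        have hnb : ¬(v < y ∧ y ≤ x) := fun hc => absurd hxy (not_lt.mpr hc.2)
        simp only [hfdef, hkdef]
        rw [if_neg hnb, zero_sub, Set.indicator_apply]
        by_cases hv : y ≤ v
        · rw [if_pos (show x < y ∧ y ≤ v from ⟨hxy, hv⟩), if_pos (Set.mem_Ici.mpr hv)]
          rw [Real.norm_eq_abs, abs_mul, abs_mul, abs_of_nonneg (hnn v)]
          simp [abs_of_nonneg]; ring
        · rw [if_neg (show ¬(x < y ∧ y ≤ v) from fun hc => hv hc.2),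
            if_neg (show v ∉ Set.Ici y by simpa using hv)]
          simp
      rw [this, integral_const_mul, integral_indicator measurableSet_Ici, hPici y,
        if_neg (not_le.mpr hxy), if_pos hxy, zero_add]
  -- the norm integral is integrable in y (it is a.e. |g|)
  have hnorm_int : Integrable (fun y => ∫ v, ‖f v y‖) := by
    apply (hg_int.abs).congr
    filter_upwards [hne] with y hy
    rw [hnorm y]
    simp only [hgdef]
    rcases lt_or_gt_of_ne hy with hlt | hgt
    · rw [if_pos (le_of_lt hlt), if_neg (not_lt.mpr (le_of_lt hlt)), add_zero,
        if_neg (not_le.mpr hlt), sub_zero, abs_mul, abs_of_nonneg (hP0 y)]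
      ring
    · rw [if_neg (not_le.mpr hgt), if_pos hgt, zero_add, if_pos (le_of_lt hgt),
        abs_mul, abs_sub_comm, abs_of_nonneg (show (0:ℝ) ≤ 1 - P y by linarith [hP1 y])]
      ring
  -- product integrability
  have hF : Integrable (Function.uncurry f) (volume.prod volume) := by
    refine (integrable_prod_iff' hFmeas.aestronglyMeasurable).mpr ?_
    exact ⟨Filter.Eventually.of_forall hsec, hnorm_int⟩
  have hswap : (∫ v, ∫ y, f v y) = ∫ y, ∫ v, f v y := integral_integral_swap hF
  -- interior points of the support
  have hfrontier : ∀ᵐ v : ℝ, v ∉ frontier (Function.support p) := by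
    refine ae_iff.mpr ?_
    simp only [not_not]
    simpa using Convex.addHaar_frontier volume hsupp
  -- positivity of P on the interior
  have hPpos : ∀ v ∈ interior (Function.support p), 0 < P v ∧ P v < 1 := by
    intro v hv
    obtain ⟨ε, hε, hball⟩ := Metric.mem_nhds_iff.mp (mem_interior_iff_mem_nhds.mp hv)
    rw [Real.ball_eq_Ioo] at hball
    have hsub1 : Set.Ioo (v - ε) v ⊆ Function.support p ∩ Set.Iic v := fun u hu =>
      ⟨hball ⟨hu.1, lt_of_lt_of_le hu.2 (by linarith)⟩, le_of_lt hu.2⟩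
    have hsub2 : Set.Ioo v (v + ε) ⊆ Function.support p ∩ Set.Ici v := fun u hu =>
      ⟨hball ⟨by linarith [hu.1], hu.2⟩, le_of_lt hu.1⟩
    have hvol : (0:ENNReal) < volume (Set.Ioo (v - ε) v) := by
      rw [Real.volume_Ioo]
      simpa using hε
    have hvol2 : (0:ENNReal) < volume (Set.Ioo v (v + ε)) := by
      rw [Real.volume_Ioo]
      simpa using hε
    constructor
    · refine (setIntegral_pos_iff_support_of_nonneg_ae
        (Filter.Eventually.of_forall (fun u => hnn u) |>.filter_mono (ae_mono Measure.restrict_le_self))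
        hp_int.integrableOn).mpr ?_
      exact lt_of_lt_of_le hvol (measure_mono hsub1)
    · have : 0 < ∫ u in Set.Ici v, p u := by
        refine (setIntegral_pos_iff_support_of_nonneg_ae
          (Filter.Eventually.of_forall (fun u => hnn u) |>.filter_mono (ae_mono Measure.restrict_le_self))
          hp_int.integrableOn).mpr ?_
        exact lt_of_lt_of_le hvol2 (measure_mono hsub2)
      rw [hPici v] at this; linarith
  -- interval integrability of h' from interior points to x
  have hii : ∀ v ∈ interior (Function.support p), IntervalIntegrable h' volume v x := by
    intro v hv
    obtain ⟨hPv0, hPv1⟩ := hPpos v hv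
    rw [intervalIntegrable_iff]
    rcases le_or_gt v x with hvx | hxv
    · rw [Set.uIoc_of_le hvx]
      refine Integrable.mono' ((hg_int.abs.const_mul (P v)⁻¹).integrableOn)
        hm'.aestronglyMeasurable ?_
      filter_upwards [ae_restrict_mem measurableSet_Ioc,
        hne.filter_mono (ae_mono Measure.restrict_le_self)] with y hy hyx
      have hylt : y < x := lt_of_le_of_ne hy.2 hyx
      have hgy : |g y| = P y * |h' y| := by
        simp only [hgdef]
        rw [if_neg (not_le.mpr hylt), sub_zero, abs_mul, abs_of_nonneg (hP0 y)]
      rw [Real.norm_eq_abs, hgy]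
      have hPy : P v ≤ P y := hPmono v y (le_of_lt hy.1)
      rw [← mul_assoc]
      calc |h' y| = (P v)⁻¹ * P v * |h' y| := by
            rw [inv_mul_cancel₀ (ne_of_gt hPv0), one_mul]
        _ ≤ (P v)⁻¹ * P y * |h' y| := by
            apply mul_le_mul_of_nonneg_right _ (abs_nonneg _)
            exact mul_le_mul_of_nonneg_left hPy (inv_nonneg.mpr (le_of_lt hPv0))
    · rw [Set.uIoc_of_ge (le_of_lt hxv)]
      refine Integrable.mono' ((hg_int.abs.const_mul (1 - P v)⁻¹).integrableOn)
        hm'.aestronglyMeasurable ?_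
      filter_upwards [ae_restrict_mem measurableSet_Ioc] with y hy
      have hgy : |g y| = (1 - P y) * |h' y| := by
        simp only [hgdef]
        rw [if_pos (le_of_lt hy.1), abs_mul, abs_sub_comm, abs_of_nonneg (by linarith [hP1 y])]
      rw [Real.norm_eq_abs, hgy]
      have hPy : P y ≤ P v := hPmono y v hy.2
      rw [← mul_assoc]
      calc |h' y| = (1 - P v)⁻¹ * (1 - P v) * |h' y| := by
            rw [inv_mul_cancel₀ (by linarith), one_mul]
        _ ≤ (1 - P v)⁻¹ * (1 - P y) * |h' y| := by
            apply mul_le_mul_of_nonneg_right _ (abs_nonneg _)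
            apply mul_le_mul_of_nonneg_left (by linarith) (inv_nonneg.mpr (by linarith))
  -- inner integral in y
  have hinner : ∀ᵐ v : ℝ, (∫ y, f v y) = p v * (h x - h v) := by
    filter_upwards [hfrontier] with v hv
    by_cases hpv : p v = 0
    · simp only [hfdef, hpv]; simp
    · have hvmem : v ∈ interior (Function.support p) := by
        by_contra hni
        exact hv ⟨subset_closure hpv, hni⟩
      have hftc : (∫ y in v..x, h' y) = h x - h v :=
        intervalIntegral.integral_eq_sub_of_hasDerivAt (fun t _ => hh' t) (hii v hvmem)
      have hker : (∫ y, h' y * k v y) = ∫ y in v..x, h' y := by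
        have hsplit : (fun y => h' y * k v y) =
            fun y => (Set.Ioc v x).indicator h' y - (Set.Ioc x v).indicator h' y := by
          funext y
          simp only [hkdef]
          rw [Set.indicator_apply, Set.indicator_apply]
          simp only [Set.mem_Ioc]
          split <;> split <;> ring
        rw [hsplit]
        rcases le_or_gt v x with hvx | hxv
        · have he : Set.Ioc x v = ∅ ∨ v = x := by
            rcases eq_or_lt_of_le hvx with he | hlt
            · exact Or.inr he
            · exact Or.inl (Set.Ioc_eq_empty (not_lt.mpr (le_of_lt hlt)))
          have hioc : IntegrableOn h' (Set.Ioc v x) := by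
            have := (hii v hvmem); rw [intervalIntegrable_iff, Set.uIoc_of_le hvx] at this
            exact this
          rcases he with he | he
          · rw [he]
            simp only [Set.indicator_empty, Pi.zero_apply, sub_zero]
            rw [integral_indicator measurableSet_Ioc,
              intervalIntegral.integral_of_le hvx]
          · subst he
            simp [Set.Ioc_self]
        · have he : Set.Ioc v x = ∅ := Set.Ioc_eq_empty (not_lt.mpr (le_of_lt hxv))
          have hioc : IntegrableOn h' (Set.Ioc x v) := by
            have := (hii v hvmem)
            rw [intervalIntegrable_iff, Set.uIoc_of_ge (le_of_lt hxv)] at this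
            exact this
          rw [he]
          simp only [Set.indicator_empty, Pi.zero_apply, zero_sub]
          rw [integral_neg, integral_indicator measurableSet_Ioc,
            intervalIntegral.integral_of_ge (le_of_lt hxv)]
      simp only [hfdef]
      rw [integral_const_mul, hker, hftc]
  -- the left-hand side of Fubini
  have hleft : (∫ v, ∫ y, f v y) = h x - ∫ v, h v * p v := by
    rw [integral_congr_ae hinner]
    have hexp : (fun v => p v * (h x - h v)) = fun v => p v * h x - h v * p v := by
      funext v; ring
    rw [hexp, integral_sub (hp_int.mul_const (h x)) hL1, integral_mul_const, hmass, one_mul]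
  -- the right-hand side of Fubini
  have hright : (∫ y, ∫ v, f v y) = ∫ y, g y := by
    apply integral_congr_ae
    filter_upwards [hne] with y hy
    rcases lt_or_gt_of_ne hy with hlt | hgt
    · have : (fun v => f v y) = fun v => h' y * (Set.Iio y).indicator p v := by
        funext v
        have hnb : ¬(x < y ∧ y ≤ v) := fun hc => absurd hlt (not_lt.mpr hc.1.le)
        simp only [hfdef, hkdef]
        rw [if_neg hnb, sub_zero, Set.indicator_apply]
        by_cases hv : v < y
        · rw [if_pos (show v < y ∧ y ≤ x from ⟨hv, le_of_lt hlt⟩), if_pos (Set.mem_Iio.mpr hv)]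
          ring
        · rw [if_neg (show ¬(v < y ∧ y ≤ x) from fun hc => hv hc.1),
            if_neg (show v ∉ Set.Iio y by simpa using hv)]
          ring
      rw [this, integral_const_mul, integral_indicator measurableSet_Iio, hPiio y, hgdef]
      dsimp only
      rw [if_neg (not_le.mpr hlt), sub_zero]; ring
    · have : (fun v => f v y) = fun v => -(h' y) * (Set.Ici y).indicator p v := by
        funext v
        have hnb : ¬(v < y ∧ y ≤ x) := fun hc => absurd hgt (not_lt.mpr hc.2)
        simp only [hfdef, hkdef]
        rw [if_neg hnb, zero_sub, Set.indicator_apply]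
        by_cases hv : y ≤ v
        · rw [if_pos (show x < y ∧ y ≤ v from ⟨hgt, hv⟩), if_pos (Set.mem_Ici.mpr hv)]
          ring
        · rw [if_neg (show ¬(x < y ∧ y ≤ v) from fun hc => hv hc.2),
            if_neg (show v ∉ Set.Ici y by simpa using hv)]
          ring
      rw [this, integral_const_mul, integral_indicator measurableSet_Ici, hPici y, hgdef]
      dsimp only
      rw [if_pos (le_of_lt hgt)]; ring
  rw [← hright, ← hswap, hleft]
end

section
/- Let X have continuous density p with cdf P and Stein kernel τ(x) = (1/p(x)) ∫_{-∞}^x (E[X] − u) p(u) du. Then E[ K(x, X) ] = τ(x) where K(x,y) = P(x∧y)(1−P(x∨y))/(p(x)p(y)), and E[ R(x, X) ] = x − E[X] where R(x,y) = (P(y) − 𝟙[x ≤ y])/p(y). -/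
/-!
Write `P` for the distribution function of `p`. Where `p y = 0`, convexity of the support forces
`P y = 0` for `y < x` and `P y = 1` for `y > x`, so the factors `p y` cancel even there. After
splitting at `x`, both identities reduce to the Fubini identities
`∫_{y ≤ x} P y dy = ∫_{u ≤ x} (x - u) p u du` and
`∫_{y > x} (1 - P y) dy = ∫_{u > x} (u - x) p u du`, the second being the first for the
reflected density `p (-u)`.
-/

open MeasureTheory Set

theorem integrable_prod_indicator_le_le {f : ℝ → ℝ} (hf : Integrable f)
    (hmf : Integrable fun u => u * f u) (x : ℝ) :
    Integrable ({z : ℝ × ℝ | z.1 ≤ z.2 ∧ z.2 ≤ x}.indicator fun z => f z.1)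
      (volume.prod volume) := by
  have hS : MeasurableSet {z : ℝ × ℝ | z.1 ≤ z.2 ∧ z.2 ≤ x} :=
    (measurableSet_le measurable_fst measurable_snd).inter
      (measurableSet_le measurable_snd measurable_const)
  have hsec : ∀ u y, {z : ℝ × ℝ | z.1 ≤ z.2 ∧ z.2 ≤ x}.indicator (fun z => f z.1) (u, y)
      = (Icc u x).indicator (fun _ => f u) y := fun _ _ => rfl
  refine (integrable_prod_iff (hf.1.comp_fst.indicator hS)).2 ⟨ae_of_all _ fun u => ?_, ?_⟩
  · simp_rw [hsec]
    exact (integrable_indicator_iff measurableSet_Icc).2 (integrableOn_const measure_Icc_lt_top.ne)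
  · simp_rw [hsec, norm_indicator_eq_indicator_norm, integral_indicator_const _ measurableSet_Icc,
      Real.volume_real_Icc, smul_eq_mul]
    refine Integrable.mono' ((hf.norm.const_mul |x|).add hmf.norm) ?_ (ae_of_all _ fun u => ?_)
    · exact ((continuous_const.sub continuous_id).max continuous_const).aestronglyMeasurable.mul
        hf.norm.1
    · have : |max (x - u) 0| ≤ |x| + |u| := by
        rw [abs_of_nonneg (le_max_right _ _), max_le_iff]
        constructor <;> linarith [neg_abs_le u, le_abs_self x, abs_nonneg x, abs_nonneg u]
      simp only [Pi.add_apply, norm_mul, Real.norm_eq_abs, abs_abs]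
      nlinarith [abs_nonneg (f u)]

theorem integral_Iic_integral_Iic {f : ℝ → ℝ} (hf : Integrable f)
    (hmf : Integrable fun u => u * f u) (x : ℝ) :
    ∫ y in Iic x, ∫ u in Iic y, f u = ∫ u in Iic x, (x - u) * f u := by
  set F := {z : ℝ × ℝ | z.1 ≤ z.2 ∧ z.2 ≤ x}.indicator fun z => f z.1
  have hy : ∀ y, ∫ u, F (u, y) = (Iic x).indicator (fun y => ∫ u in Iic y, f u) y := by
    intro y
    by_cases hyx : y ≤ x
    · rw [indicator_of_mem (show y ∈ Iic x from hyx), ← integral_indicator measurableSet_Iic]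
      congr with u
      simp [F, indicator_apply, hyx]
    · simp [F, hyx]
  have hu : ∀ u, ∫ y, F (u, y) = (Iic x).indicator (fun u => (x - u) * f u) u := by
    intro u
    have : (fun y => F (u, y)) = (Icc u x).indicator fun _ => f u := rfl
    rw [this, integral_indicator_const _ measurableSet_Icc, Real.volume_real_Icc, smul_eq_mul]
    by_cases hux : u ≤ x
    · rw [indicator_of_mem (show u ∈ Iic x from hux), max_eq_left (by linarith)]
    · rw [indicator_of_notMem (show u ∉ Iic x from hux), max_eq_right (by linarith [not_le.1 hux]),
        zero_mul]
  calc ∫ y in Iic x, ∫ u in Iic y, f u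
      = ∫ y, ∫ u, F (u, y) := by simp_rw [hy, integral_indicator measurableSet_Iic]
    _ = ∫ u, ∫ y, F (u, y) := (integral_integral_swap (f := fun u y => F (u, y))
      (integrable_prod_indicator_le_le hf hmf x)).symm
    _ = ∫ u in Iic x, (x - u) * f u := by simp_rw [hu, integral_indicator measurableSet_Iic]

theorem integral_Ioi_integral_Ioi {f : ℝ → ℝ} (hf : Integrable f)
    (hmf : Integrable fun u => u * f u) (x : ℝ) :
    ∫ y in Ioi x, ∫ u in Ioi y, f u = ∫ u in Ioi x, (u - x) * f u := by
  have hmf' : Integrable fun v => v * f (-v) := by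
    simpa using hmf.comp_neg.neg
  calc ∫ y in Ioi x, ∫ u in Ioi y, f u
      = ∫ y in Ioi x, (fun t => ∫ v in Iic t, f (-v)) (-y) := by simp
    _ = ∫ t in Iic (-x), ∫ v in Iic t, f (-v) :=
      integral_comp_neg_Ioi x (fun t => ∫ v in Iic t, f (-v))
    _ = ∫ v in Iic (-x), (-x - v) * f (-v) := integral_Iic_integral_Iic hf.comp_neg hmf' (-x)
    _ = ∫ u in Ioi x, (u - x) * f u := by
      rw [← integral_comp_neg_Ioi]; congr with u; rw [neg_neg]; ring

section Density

variable {p : ℝ → ℝ}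

theorem one_sub_integral_Iic (hint : Integrable p) (hmass : ∫ u, p u = 1) (y : ℝ) :
    1 - ∫ u in Iic y, p u = ∫ u in Ioi y, p u := by
  rw [← hmass, ← intervalIntegral.integral_Iic_add_Ioi hint.integrableOn hint.integrableOn,
    add_sub_cancel_left]

theorem setIntegral_sub_mul (hint : Integrable p) (hmean : Integrable fun u => u * p u)
    (s : Set ℝ) (c : ℝ) :
    ∫ u in s, (c - u) * p u = c * (∫ u in s, p u) - ∫ u in s, u * p u := by
  rw [← integral_const_mul, ← integral_sub (hint.integrableOn.const_mul c) hmean.integrableOn]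
  simp_rw [sub_mul]

theorem integral_Iic_cdf (hint : Integrable p) (hmean : Integrable fun u => u * p u) (x : ℝ) :
    ∫ y in Iic x, ∫ u in Iic y, p u = x * (∫ u in Iic x, p u) - ∫ u in Iic x, u * p u := by
  rw [integral_Iic_integral_Iic hint hmean, setIntegral_sub_mul hint hmean]

theorem integral_Ioi_one_sub_cdf (hint : Integrable p) (hmass : ∫ u, p u = 1)
    (hmean : Integrable fun u => u * p u) (x : ℝ) :
    ∫ y in Ioi x, (1 - ∫ u in Iic y, p u) = (∫ u in Ioi x, u * p u) - x * ∫ u in Ioi x, p u := by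
  simp_rw [one_sub_integral_Iic hint hmass, integral_Ioi_integral_Ioi hint hmean, ← neg_sub x,
    neg_mul, integral_neg, setIntegral_sub_mul hint hmean, neg_sub]

theorem integral_cdf_min_mul_one_sub_cdf_max (hint : Integrable p) (hmass : ∫ u, p u = 1)
    (hmean : Integrable fun u => u * p u) (x : ℝ)
    (hF : Integrable fun y => (∫ u in Iic (min x y), p u) * (1 - ∫ u in Iic (max x y), p u)) :
    ∫ y, (∫ u in Iic (min x y), p u) * (1 - ∫ u in Iic (max x y), p u)
      = ∫ u in Iic x, ((∫ v, v * p v) - u) * p u := by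
  have hIic : ∫ y in Iic x, (∫ u in Iic (min x y), p u) * (1 - ∫ u in Iic (max x y), p u)
      = (1 - ∫ u in Iic x, p u) * ∫ y in Iic x, ∫ u in Iic y, p u := by
    rw [← integral_const_mul]
    refine setIntegral_congr_fun measurableSet_Iic fun y hy => ?_
    rw [min_eq_right hy, max_eq_left hy, mul_comm]
  have hIoi : ∫ y in Ioi x, (∫ u in Iic (min x y), p u) * (1 - ∫ u in Iic (max x y), p u)
      = (∫ u in Iic x, p u) * ∫ y in Ioi x, (1 - ∫ u in Iic y, p u) := by
    rw [← integral_const_mul]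
    refine setIntegral_congr_fun measurableSet_Ioi fun y hy => ?_
    rw [min_eq_left (le_of_lt hy), max_eq_right (le_of_lt hy)]
  have hsplit :=
    intervalIntegral.integral_Iic_add_Ioi (b := x) hmean.integrableOn hmean.integrableOn
  have hS := one_sub_integral_Iic hint hmass x
  rw [← intervalIntegral.integral_Iic_add_Ioi hF.integrableOn hF.integrableOn, hIic, hIoi,
    integral_Iic_cdf hint hmean, integral_Ioi_one_sub_cdf hint hmass hmean,
    setIntegral_sub_mul hint hmean]
  linear_combination (x * ∫ u in Iic x, p u) * hS + (∫ u in Iic x, p u) * hsplit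

theorem integral_cdf_sub_indicator (hint : Integrable p) (hmass : ∫ u, p u = 1)
    (hmean : Integrable fun u => u * p u) (x : ℝ)
    (hG : Integrable fun y => (∫ u in Iic y, p u) - if x ≤ y then (1 : ℝ) else 0) :
    ∫ y, ((∫ u in Iic y, p u) - if x ≤ y then (1 : ℝ) else 0) = x - ∫ v, v * p v := by
  have hIio : ∫ y in Iio x, ((∫ u in Iic y, p u) - if x ≤ y then (1 : ℝ) else 0)
      = ∫ y in Iic x, ∫ u in Iic y, p u := by
    rw [integral_Iic_eq_integral_Iio]
    refine setIntegral_congr_fun measurableSet_Iio fun y hy => ?_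
    rw [if_neg (not_le.2 hy), sub_zero]
  have hIci : ∫ y in Ici x, ((∫ u in Iic y, p u) - if x ≤ y then (1 : ℝ) else 0)
      = -∫ y in Ioi x, (1 - ∫ u in Iic y, p u) := by
    rw [← integral_Ici_eq_integral_Ioi, ← integral_neg]
    refine setIntegral_congr_fun measurableSet_Ici fun y hy => ?_
    rw [if_pos (mem_Ici.1 hy), neg_sub]
  have hsplit :=
    intervalIntegral.integral_Iic_add_Ioi (b := x) hmean.integrableOn hmean.integrableOn
  have hS := one_sub_integral_Iic hint hmass x
  rw [← intervalIntegral.integral_Iio_add_Ici hG.integrableOn hG.integrableOn, hIio, hIci,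
    integral_Iic_cdf hint hmean, integral_Ioi_one_sub_cdf hint hmass hmean]
  linear_combination (-x) * hS - hsplit

theorem integral_Iic_eq_zero_of_notMem_support (hsupp : (Function.support p).OrdConnected)
    {x y : ℝ} (hx : x ∈ Function.support p) (hy : y ∉ Function.support p) (hyx : y < x) :
    ∫ u in Iic y, p u = 0 :=
  setIntegral_eq_zero_of_forall_eq_zero fun _ hu =>
    of_not_not fun hu' => hy (hsupp.out hu' hx ⟨hu, hyx.le⟩)

theorem integral_Ioi_eq_zero_of_notMem_support (hsupp : (Function.support p).OrdConnected)
    {x y : ℝ} (hx : x ∈ Function.support p) (hy : y ∉ Function.support p) (hxy : x < y) :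
    ∫ u in Ioi y, p u = 0 :=
  setIntegral_eq_zero_of_forall_eq_zero fun _ hu =>
    of_not_not fun hu' => hy (hsupp.out hx hu' ⟨hxy.le, le_of_lt hu⟩)

theorem cdf_min_mul_one_sub_cdf_max_eq_zero (hint : Integrable p) (hmass : ∫ u, p u = 1)
    (hsupp : (Function.support p).OrdConnected) {x y : ℝ} (hx : x ∈ Function.support p)
    (hy : y ∉ Function.support p) :
    (∫ u in Iic (min x y), p u) * (1 - ∫ u in Iic (max x y), p u) = 0 := by
  rcases (ne_of_mem_of_not_mem hx hy).lt_or_gt with hxy | hyx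
  · rw [max_eq_right hxy.le, one_sub_integral_Iic hint hmass,
      integral_Ioi_eq_zero_of_notMem_support hsupp hx hy hxy, mul_zero]
  · rw [min_eq_right hyx.le, integral_Iic_eq_zero_of_notMem_support hsupp hx hy hyx, zero_mul]

theorem cdf_sub_indicator_eq_zero (hint : Integrable p) (hmass : ∫ u, p u = 1)
    (hsupp : (Function.support p).OrdConnected) {x y : ℝ} (hx : x ∈ Function.support p)
    (hy : y ∉ Function.support p) :
    (∫ u in Iic y, p u) - (if x ≤ y then (1 : ℝ) else 0) = 0 := by
  rcases (ne_of_mem_of_not_mem hx hy).lt_or_gt with hxy | hyx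
  · rw [if_pos hxy.le, ← neg_sub, one_sub_integral_Iic hint hmass,
      integral_Ioi_eq_zero_of_notMem_support hsupp hx hy hxy, neg_zero]
  · rw [if_neg (not_le.2 hyx), integral_Iic_eq_zero_of_notMem_support hsupp hx hy hyx, sub_zero]

end Density

theorem stmt14_general (p : ℝ → ℝ)
    (hsupp : Convex ℝ (Function.support p))
    (hmass : ∫ x, p x = 1)
    (hmean : Integrable (fun u => u * p u))
    (hIK : ∀ x, Integrable (fun y =>
      ((∫ u in Set.Iic (min x y), p u) * (1 - ∫ u in Set.Iic (max x y), p u) /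
        (p x * p y)) * p y))
    (hIR : ∀ x, Integrable (fun y =>
      (((∫ u in Set.Iic y, p u) - if x ≤ y then (1 : ℝ) else 0) / p y) * p y)) :
    ∀ x ∈ Function.support p,
      (∫ y, ((∫ u in Set.Iic (min x y), p u) * (1 - ∫ u in Set.Iic (max x y), p u) /
          (p x * p y)) * p y
        = (p x)⁻¹ * ∫ u in Set.Iic x, ((∫ v, v * p v) - u) * p u) ∧
      (∫ y, (((∫ u in Set.Iic y, p u) - if x ≤ y then (1 : ℝ) else 0) / p y) * p y
        = x - ∫ v, v * p v) := by
  intro x hx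
  have hint : Integrable p := .of_integral_ne_zero (by rw [hmass]; exact one_ne_zero)
  have hK y : (∫ u in Iic (min x y), p u) * (1 - ∫ u in Iic (max x y), p u) / (p x * p y) * p y
      = (p x)⁻¹ * ((∫ u in Iic (min x y), p u) * (1 - ∫ u in Iic (max x y), p u)) := by
    rw [← div_div, div_mul_cancel_of_imp fun hy => by
      rw [cdf_min_mul_one_sub_cdf_max_eq_zero hint hmass hsupp.ordConnected hx
        (Function.notMem_support.2 hy), zero_div], div_eq_inv_mul]
  have hR y : ((∫ u in Iic y, p u) - if x ≤ y then (1 : ℝ) else 0) / p y * p y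
      = (∫ u in Iic y, p u) - if x ≤ y then (1 : ℝ) else 0 :=
    div_mul_cancel_of_imp fun hy =>
      cdf_sub_indicator_eq_zero hint hmass hsupp.ordConnected hx (Function.notMem_support.2 hy)
  specialize hIK x
  specialize hIR x
  simp_rw [hK, hR] at hIK hIR ⊢
  refine ⟨?_, integral_cdf_sub_indicator hint hmass hmean x hIR⟩
  rw [integral_const_mul, integral_cdf_min_mul_one_sub_cdf_max hint hmass hmean x
    ((integrable_const_mul_iff (inv_ne_zero hx).isUnit _).1 hIK)]

/-- Expectations of the kernels `K` and `R`: with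
`K(x,y) = P(x∧y)(1-P(x∨y))/(p(x)p(y))` and `R(x,y) = (P(y) - 𝟙[x ≤ y])/p(y)`,
one has `E[K(x,X)] = τ(x)` (the Stein kernel) and `E[R(x,X)] = x - E[X]`. -/
theorem stmt14 (p : ℝ → ℝ) (hmeas : Measurable p) (hnn : ∀ x, 0 ≤ p x)
    (hsupp : Convex ℝ (Function.support p))
    (hmass : ∫ x, p x = 1)
    (hmean : Integrable (fun u => u * p u))
    (hIK : ∀ x, Integrable (fun y =>
      ((∫ u in Set.Iic (min x y), p u) * (1 - ∫ u in Set.Iic (max x y), p u) /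
        (p x * p y)) * p y))
    (hIR : ∀ x, Integrable (fun y =>
      (((∫ u in Set.Iic y, p u) - if x ≤ y then (1 : ℝ) else 0) / p y) * p y)) :
    ∀ x ∈ Function.support p,
      (∫ y, ((∫ u in Set.Iic (min x y), p u) * (1 - ∫ u in Set.Iic (max x y), p u) /
          (p x * p y)) * p y
        = (p x)⁻¹ * ∫ u in Set.Iic x, ((∫ v, v * p v) - u) * p u) ∧
      (∫ y, (((∫ u in Set.Iic y, p u) - if x ≤ y then (1 : ℝ) else 0) / p y) * p y
        = x - ∫ v, v * p v) :=
  stmt14_general p hsupp hmass hmean hIK hIR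
end

section
/- For the Student t distribution with ν > 2 degrees of freedom, the Stein kernel is τ_ν(x) = (x²+ν)/(ν−1); that is, (1/p_ν(x)) ∫_{-∞}^x (−u) p_ν(u) du = (x²+ν)/(ν−1) for all x, where p_ν(x) = (ν/(ν+x²))^{(1+ν)/2} ν^{-1/2}/B(ν/2, 1/2). -/
/-! Up to its normalising constant `C`, `p_ν(u) = C (ν + u²)^(-(ν+1)/2)`, and `-u p_ν(u)` is the
derivative of `C (ν + u²)^(-(ν-1)/2) / (ν - 1) = (u² + ν) p_ν(u) / (ν - 1)`, which vanishes at `-∞`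
because `ν > 1`. The integral over `(-∞, x]` is therefore `(x² + ν) p_ν(x) / (ν - 1)`, and `C`
cancels in the Stein kernel. -/

open Real MeasureTheory Set Filter Topology

theorem integrableOn_Iic_deriv_of_nonneg' {G g : ℝ → ℝ} {a l : ℝ}
    (hderiv : ∀ x ∈ Iic a, HasDerivAt G (g x) x) (hg : ∀ x ∈ Iio a, 0 ≤ g x)
    (hG : Tendsto G atBot (𝓝 l)) : IntegrableOn g (Iic a) := by
  have hreflect : IntegrableOn (fun t => g (-t)) (Ioi (-a)) := by
    refine integrableOn_Ioi_deriv_of_nonneg' (g := fun t => -G (-t)) (l := -l) (fun t ht => ?_)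
      (fun t ht => hg (-t) (by simpa [neg_lt] using ht)) ?_
    · simpa using ((hderiv (-t) (by simpa [neg_le] using ht)).comp t (hasDerivAt_neg' t)).fun_neg
    · exact (hG.comp tendsto_neg_atTop_atBot).neg
  rw [integrableOn_Iic_iff_integrableOn_Iio, ← (Measure.measurePreserving_neg (volume : Measure ℝ)).integrableOn_comp_preimage
      (Homeomorph.neg ℝ).measurableEmbedding]
  simpa [Function.comp_def] using hreflect

theorem integral_Iic_of_hasDerivAt_of_eventually_nonneg {G g : ℝ → ℝ} {m : ℝ}
    (hderiv : ∀ x, HasDerivAt G (g x) x) (hcont : Continuous g)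
    (hg : ∀ᶠ x in atBot, 0 ≤ g x) (hG : Tendsto G atBot (𝓝 m)) (x : ℝ) :
    ∫ u in Iic x, g u = G x - m := by
  obtain ⟨b, hb⟩ := eventually_atBot.1 hg
  have hint : IntegrableOn g (Iic (min b x)) :=
    integrableOn_Iic_deriv_of_nonneg' (fun u _ => hderiv u)
      (fun u hu => hb u (hu.le.trans (min_le_left b x))) hG
  refine integral_Iic_of_hasDerivAt_of_tendsto' (fun u _ => hderiv u) ?_ hG
  rw [← Iic_union_Icc_eq_Iic (min_le_right b x)]
  exact hint.union hcont.integrableOn_Icc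

theorem hasDerivAt_add_sq_rpow_div (ν u : ℝ) (hν : 0 < ν) (hν1 : ν ≠ 1) :
    HasDerivAt (fun t => (ν + t ^ 2) ^ (-((ν - 1) / 2)) / (ν - 1))
      (-u * (ν + u ^ 2) ^ (-((ν + 1) / 2))) u := by
  have hpos : 0 < ν + u ^ 2 := by positivity
  have hsq : HasDerivAt (fun u : ℝ => ν + u ^ 2) (2 * u) u := by
    simpa using (hasDerivAt_pow 2 u).const_add ν
  have := ((hasDerivAt_rpow_const (p := -((ν - 1) / 2)) (Or.inl hpos.ne')).comp u hsq).div_const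
    (ν - 1)
  refine this.congr_deriv ?_
  have : ν - 1 ≠ 0 := sub_ne_zero.2 hν1
  rw [show -((ν - 1) / 2) - 1 = -((ν + 1) / 2) by ring]
  field_simp

theorem tendsto_add_sq_rpow_neg_atBot (ν : ℝ) (hν : 1 < ν) :
    Tendsto (fun u : ℝ => (ν + u ^ 2) ^ (-((ν - 1) / 2))) atBot (𝓝 0) := by
  have hsq : Tendsto (fun u : ℝ => ν + u ^ 2) atBot atTop :=
    tendsto_atTop_add_const_left _ _ (by simpa [sq] using tendsto_id.atBot_mul_atBot₀ tendsto_id)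
  exact (tendsto_rpow_neg_atTop (by linarith)).comp hsq

theorem integral_Iic_neg_mul_add_sq_rpow (ν : ℝ) (hν : 1 < ν) (x : ℝ) :
    ∫ u in Iic x, -u * (ν + u ^ 2) ^ (-((ν + 1) / 2)) =
      (x ^ 2 + ν) / (ν - 1) * (ν + x ^ 2) ^ (-((ν + 1) / 2)) := by
  have hν0 : 0 < ν := by linarith
  have hcont : Continuous fun u : ℝ => -u * (ν + u ^ 2) ^ (-((ν + 1) / 2)) :=
    continuous_neg.mul <| (continuous_const.add (continuous_pow 2)).rpow_const
      fun u => Or.inl (by positivity : 0 < ν + u ^ 2).ne'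
  have hnonneg : ∀ᶠ u in atBot, 0 ≤ -u * (ν + u ^ 2) ^ (-((ν + 1) / 2)) := by
    filter_upwards [eventually_le_atBot 0] with u hu
    exact mul_nonneg (neg_nonneg.2 hu) (rpow_nonneg (by positivity) _)
  have hlim := (tendsto_add_sq_rpow_neg_atBot ν hν).div_const (ν - 1)
  rw [zero_div] at hlim
  rw [integral_Iic_of_hasDerivAt_of_eventually_nonneg
    (fun u => hasDerivAt_add_sq_rpow_div ν u hν0 hν.ne') hcont hnonneg hlim, sub_zero,
    show -((ν - 1) / 2) = 1 + -((ν + 1) / 2) by ring, rpow_add (by positivity), rpow_one]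
  ring

/-- The Stein kernel of the Student `t_ν` distribution (ν > 2) is
`τ_ν(x) = (x²+ν)/(ν-1)`: that is, `(1/p_ν(x)) ∫_{-∞}^x (-u) p_ν(u) du = (x²+ν)/(ν-1)`. -/
theorem stmt18 (ν : ℝ) (hν : 2 < ν) (p : ℝ → ℝ)
    (hp : ∀ x, p x =
      (ν / (ν + x ^ 2)) ^ ((1 + ν) / 2) * ν ^ (-(1 : ℝ) / 2) /
        (Real.Gamma (ν / 2) * Real.Gamma (1 / 2) / Real.Gamma (ν / 2 + 1 / 2))) :
    ∀ x : ℝ, (p x)⁻¹ * ∫ u in Set.Iic x, (-u) * p u = (x ^ 2 + ν) / (ν - 1) := by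
  intro x
  have hν0 : 0 < ν := by linarith
  set C := ν ^ ((ν + 1) / 2) * ν ^ (-(1 : ℝ) / 2) /
    (Real.Gamma (ν / 2) * Real.Gamma (1 / 2) / Real.Gamma (ν / 2 + 1 / 2))
  have hC : C ≠ 0 := by
    have := Real.Gamma_pos_of_pos (by positivity : 0 < ν / 2)
    have := Real.Gamma_pos_of_pos (by positivity : (0 : ℝ) < 1 / 2)
    have := Real.Gamma_pos_of_pos (by positivity : 0 < ν / 2 + 1 / 2)
    positivity
  have hpC : ∀ u, p u = C * (ν + u ^ 2) ^ (-((ν + 1) / 2)) := fun u => by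
    have hu : 0 ≤ ν + u ^ 2 := by positivity
    rw [hp, div_rpow hν0.le hu, rpow_neg hu, add_comm 1 ν]
    ring
  have hq : (ν + x ^ 2) ^ (-((ν + 1) / 2)) ≠ 0 := (rpow_pos_of_pos (by positivity) _).ne'
  simp_rw [hpC, mul_left_comm _ C, integral_const_mul,
    integral_Iic_neg_mul_add_sq_rpow ν (by linarith) x]
  field_simp
end

section
/- Let X_n be the maximum of n i.i.d. Pareto(α) random variables (cdf F(x) = 1 − x^{-α} for x ≥ 1) rescaled by n^{1/α}, so X_n has density p_n(x) = α x^{-α-1}(1 − x^{-α}/n)^{n-1} for x ≥ n^{-1/α}. With c(x) = x^{α+1} and the operator T_n c(x) = (Δ(c p_n))(x)/p_n(x) one has (1/α) T_n c(x) = ((n−1)/n)(1 − x^{-α}/n)^{-1}, and E[ |1 − (1/α) T_n c(X_n)| ] = (2/(n−1)) (1 − 1/n)^n ≤ (2/e)/(n−1). -/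
/-!
On the support `x > n^{-1/α}` one has `c p_n = α u^{n-1}` with `u(x) = 1 - x^{-α}/n`, which makes
`T_n c` explicit, and `(1 - (1/α) T_n c) p_n` is the derivative of `Φ = u^n - u^{n-1}`. This
derivative changes sign exactly at `x = 1`, and `Φ` vanishes both at the lower end of the support
and at infinity, so the expectation equals `-2 Φ(1) = 2 (1 - 1/n)^{n-1} / n`. The final bound is
`(1 - 1/n)^n ≤ e^{-1}`.
-/

open Real MeasureTheory Set Filter Topology

theorem integral_Ioi_abs_of_hasDerivAt_of_sign_change {Φ φ : ℝ → ℝ} {a c l : ℝ}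
    (hac : a < c) (hcont : ContinuousOn Φ (Icc a c)) (hderiv : ∀ x ∈ Ioi a, HasDerivAt Φ (φ x) x)
    (hφneg : ∀ x ∈ Ioc a c, φ x ≤ 0) (hφpos : ∀ x ∈ Ioi c, 0 ≤ φ x)
    (hΦtop : Tendsto Φ atTop (𝓝 l)) :
    ∫ x in Ioi a, |φ x| = Φ a - 2 * Φ c + l := by
  have hderiv_left : ∀ x ∈ Ioo a c, HasDerivAt (fun y => -Φ y) (-φ x) x :=
    fun x hx => (hderiv x hx.1).neg
  have hderiv_right : ∀ x ∈ Ioi c, HasDerivAt Φ (φ x) x :=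
    fun x hx => hderiv x (hac.trans hx)
  have hint_left : IntegrableOn (fun x => -φ x) (Ioc a c) :=
    intervalIntegral.integrableOn_deriv_of_nonneg hcont.neg hderiv_left
      fun x hx => neg_nonneg.2 (hφneg x (Ioo_subset_Ioc_self hx))
  have hcont_c : ContinuousWithinAt Φ (Ici c) c :=
    (hderiv c hac).continuousAt.continuousWithinAt
  have hint_right : IntegrableOn φ (Ioi c) :=
    integrableOn_Ioi_deriv_of_nonneg hcont_c hderiv_right hφpos hΦtop
  have hleft : ∫ x in Ioc a c, |φ x| = Φ a - Φ c := by
    rw [setIntegral_congr_fun measurableSet_Ioc fun x hx => abs_of_nonpos (hφneg x hx),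
      ← intervalIntegral.integral_of_le hac.le,
      intervalIntegral.integral_eq_sub_of_hasDerivAt_of_le hac.le hcont.neg hderiv_left
        ((intervalIntegrable_iff_integrableOn_Ioc_of_le hac.le).2 hint_left), Pi.neg_apply,
      Pi.neg_apply, neg_sub_neg]
  have hright : ∫ x in Ioi c, |φ x| = l - Φ c := by
    rw [setIntegral_congr_fun measurableSet_Ioi fun x hx => abs_of_nonneg (hφpos x hx)]
    exact integral_Ioi_of_hasDerivAt_of_tendsto hcont_c hderiv_right hint_right hΦtop
  have hint_abs_left : IntegrableOn (fun x => |φ x|) (Ioc a c) := by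
    simpa only [IntegrableOn, abs_neg] using hint_left.abs
  rw [← Ioc_union_Ioi_eq_Ioi hac.le, setIntegral_union (Ioc_disjoint_Ioi le_rfl) measurableSet_Ioi
    hint_abs_left hint_right.abs, hleft, hright]
  ring

noncomputable section

/-- The Pareto cdf at `n^{1/α} x`; its `n`-th power is the cdf of `X_n`. -/
def scaledParetoCdf (α : ℝ) (n : ℕ) (x : ℝ) : ℝ := 1 - x ^ (-α) / n

def paretoMaxDensity (α : ℝ) (n : ℕ) (x : ℝ) : ℝ :=
  if (n : ℝ) ^ (-(1 : ℝ) / α) ≤ x then α * x ^ (-α - 1) * scaledParetoCdf α n x ^ (n - 1)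
  else 0

def steinTransform (α : ℝ) (p : ℝ → ℝ) (x : ℝ) : ℝ :=
  deriv (fun y => y ^ (α + 1) * p y) x / p x

def paretoMaxPotential (α : ℝ) (n : ℕ) (x : ℝ) : ℝ :=
  scaledParetoCdf α n x ^ n - scaledParetoCdf α n x ^ (n - 1)

end

section

variable {α x : ℝ} {n : ℕ}

theorem rpow_neg_one_div_rpow_neg {y : ℝ} (hy : 0 ≤ y) (hα : α ≠ 0) :
    (y ^ (-(1 : ℝ) / α)) ^ (-α) = y := by
  rw [← rpow_mul hy, show -(1 : ℝ) / α * -α = 1 by field_simp, rpow_one]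

theorem scaledParetoCdf_threshold (hα : α ≠ 0) (hn : n ≠ 0) :
    scaledParetoCdf α n ((n : ℝ) ^ (-(1 : ℝ) / α)) = 0 := by
  rw [scaledParetoCdf, rpow_neg_one_div_rpow_neg n.cast_nonneg hα,
    div_self (Nat.cast_ne_zero.2 hn), sub_self]

theorem scaledParetoCdf_pos (hα : 0 < α) (hn : n ≠ 0) (hx : (n : ℝ) ^ (-(1 : ℝ) / α) < x) :
    0 < scaledParetoCdf α n x := by
  have hn' : (0 : ℝ) < n := Nat.cast_pos.2 (Nat.pos_of_ne_zero hn)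
  rw [scaledParetoCdf, sub_pos, div_lt_one hn']
  simpa only [rpow_neg_one_div_rpow_neg hn'.le hα.ne'] using
    rpow_lt_rpow_of_neg (rpow_pos_of_pos hn' _) hx (neg_neg_of_pos hα)

theorem hasDerivAt_scaledParetoCdf (hx : x ≠ 0) :
    HasDerivAt (scaledParetoCdf α n) (α * x ^ (-α - 1) / n) x := by
  have h := ((hasDerivAt_rpow_const (p := -α) (Or.inl hx)).div_const (n : ℝ)).const_sub 1
  exact h.congr_deriv (by ring)

theorem tendsto_scaledParetoCdf_atTop (hα : 0 < α) :
    Tendsto (scaledParetoCdf α n) atTop (𝓝 1) := by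
  have h := ((tendsto_rpow_neg_atTop hα).div_const (n : ℝ)).const_sub 1
  rwa [zero_div, sub_zero] at h

theorem paretoMaxDensity_eq_of_lt (hx : (n : ℝ) ^ (-(1 : ℝ) / α) < x) :
    paretoMaxDensity α n x = α * x ^ (-α - 1) * scaledParetoCdf α n x ^ (n - 1) :=
  if_pos hx.le

theorem paretoMaxDensity_eq_zero_of_le (hα : α ≠ 0) (hn : 2 ≤ n)
    (hx : x ≤ (n : ℝ) ^ (-(1 : ℝ) / α)) :
    paretoMaxDensity α n x = 0 := by
  rcases hx.lt_or_eq with hx | rfl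
  · exact if_neg hx.not_ge
  · rw [paretoMaxDensity, if_pos le_rfl, scaledParetoCdf_threshold hα (by omega),
      zero_pow (by omega), mul_zero]

theorem rpow_mul_paretoMaxDensity_eventuallyEq (hx : (n : ℝ) ^ (-(1 : ℝ) / α) < x) :
    (fun y => y ^ (α + 1) * paretoMaxDensity α n y) =ᶠ[𝓝 x]
      fun y => α * scaledParetoCdf α n y ^ (n - 1) := by
  filter_upwards [Ioi_mem_nhds hx] with y hy
  have hy0 : 0 < y := (rpow_nonneg n.cast_nonneg _).trans_lt hy
  rw [paretoMaxDensity_eq_of_lt hy, ← mul_assoc, mul_left_comm, ← rpow_add hy0]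
  norm_num

theorem steinTransform_paretoMaxDensity (hα : 0 < α) (hn : 2 ≤ n)
    (hx : (n : ℝ) ^ (-(1 : ℝ) / α) < x) :
    1 / α * steinTransform α (paretoMaxDensity α n) x =
      ((n : ℝ) - 1) / n * (scaledParetoCdf α n x)⁻¹ := by
  have hx0 : 0 < x := (rpow_nonneg n.cast_nonneg _).trans_lt hx
  have hu := scaledParetoCdf_pos hα (by omega : n ≠ 0) hx
  have hderiv :=
    ((hasDerivAt_scaledParetoCdf (α := α) (n := n) hx0.ne').fun_pow (n - 1)).const_mul α
  rw [steinTransform, (rpow_mul_paretoMaxDensity_eventuallyEq hx).deriv_eq, hderiv.deriv,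
    paretoMaxDensity_eq_of_lt hx, Nat.cast_sub (by omega : 1 ≤ n), Nat.cast_one,
    show n - 1 - 1 = n - 2 by omega, show n - 1 = n - 2 + 1 by omega, pow_succ]
  field_simp

theorem hasDerivAt_paretoMaxPotential (hn : 2 ≤ n) (hx : x ≠ 0) :
    HasDerivAt (paretoMaxPotential α n)
      ((1 - x ^ (-α)) * scaledParetoCdf α n x ^ (n - 2) * (α * x ^ (-α - 1) / n)) x := by
  have hu := hasDerivAt_scaledParetoCdf (α := α) (n := n) hx
  refine ((hu.fun_pow n).sub (hu.fun_pow (n - 1))).congr_deriv ?_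
  obtain ⟨m, rfl⟩ : ∃ m, n = m + 2 := ⟨n - 2, by omega⟩
  simp only [scaledParetoCdf, Nat.add_sub_cancel, show m + 2 - 1 = m + 1 by omega,
    show m + 1 - 1 = m by omega, pow_succ]
  push_cast
  field_simp
  ring

theorem one_sub_steinTransform_mul_paretoMaxDensity (hα : 0 < α) (hn : 2 ≤ n)
    (hx : (n : ℝ) ^ (-(1 : ℝ) / α) < x) :
    (1 - 1 / α * steinTransform α (paretoMaxDensity α n) x) * paretoMaxDensity α n x =
      (1 - x ^ (-α)) * scaledParetoCdf α n x ^ (n - 2) * (α * x ^ (-α - 1) / n) := by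
  have hu := scaledParetoCdf_pos hα (by omega : n ≠ 0) hx
  rw [steinTransform_paretoMaxDensity hα hn hx, paretoMaxDensity_eq_of_lt hx,
    show n - 1 = n - 2 + 1 by omega, pow_succ]
  field_simp
  rw [scaledParetoCdf]
  field_simp
  ring

theorem paretoMaxPotential_threshold (hα : α ≠ 0) (hn : 2 ≤ n) :
    paretoMaxPotential α n ((n : ℝ) ^ (-(1 : ℝ) / α)) = 0 := by
  rw [paretoMaxPotential, scaledParetoCdf_threshold hα (by omega), zero_pow (by omega),
    zero_pow (by omega), sub_zero]

theorem tendsto_paretoMaxPotential_atTop (hα : 0 < α) :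
    Tendsto (paretoMaxPotential α n) atTop (𝓝 0) := by
  have hu := tendsto_scaledParetoCdf_atTop (n := n) hα
  have h := (hu.pow n).sub (hu.pow (n - 1))
  rwa [one_pow, one_pow, sub_self] at h

theorem integral_abs_one_sub_steinTransform_mul_paretoMaxDensity (hα : 0 < α) (hn : 2 ≤ n) :
    ∫ x, |1 - 1 / α * steinTransform α (paretoMaxDensity α n) x| * paretoMaxDensity α n x =
      -2 * paretoMaxPotential α n 1 := by
  set b : ℝ := (n : ℝ) ^ (-(1 : ℝ) / α)
  have hn1 : (1 : ℝ) < n := by exact_mod_cast hn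
  have hb0 : 0 < b := rpow_pos_of_pos (by linarith) _
  have hb1 : b < 1 := rpow_lt_one_of_one_lt_of_neg hn1 (div_neg_of_neg_of_pos (by norm_num) hα)
  set φ : ℝ → ℝ := fun x =>
    (1 - x ^ (-α)) * scaledParetoCdf α n x ^ (n - 2) * (α * x ^ (-α - 1) / n)
  have hintegrand : (fun x => |1 - 1 / α * steinTransform α (paretoMaxDensity α n) x| *
      paretoMaxDensity α n x) = (Ioi b).indicator fun x => |φ x| := by
    funext x
    rcases le_or_gt x b with hx | hx
    · rw [paretoMaxDensity_eq_zero_of_le hα.ne' hn hx, mul_zero,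
        indicator_of_notMem (notMem_Ioi.2 hx)]
    · have hu := scaledParetoCdf_pos hα (by omega : n ≠ 0) hx
      have hp : 0 ≤ paretoMaxDensity α n x := by
        rw [paretoMaxDensity_eq_of_lt hx]
        have hxpow := rpow_pos_of_pos (hb0.trans hx) (-α - 1)
        positivity
      rw [indicator_of_mem (mem_Ioi.2 hx), ← abs_of_nonneg hp, ← abs_mul,
        one_sub_steinTransform_mul_paretoMaxDensity hα hn hx]
  have hderiv : ∀ x ∈ Ioi b, HasDerivAt (paretoMaxPotential α n) (φ x) x :=
    fun x hx => hasDerivAt_paretoMaxPotential hn (hb0.trans hx).ne'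
  have hφ_factor :
      ∀ x ∈ Ioi b, 0 ≤ scaledParetoCdf α n x ^ (n - 2) * (α * x ^ (-α - 1) / n) := by
    intro x hx
    have hu := scaledParetoCdf_pos hα (by omega : n ≠ 0) hx
    have hxpow := rpow_pos_of_pos (hb0.trans hx) (-α - 1)
    positivity
  have hφneg : ∀ x ∈ Ioc b 1, φ x ≤ 0 := by
    intro x hx
    simp only [φ, mul_assoc]
    refine mul_nonpos_of_nonpos_of_nonneg ?_ (hφ_factor x hx.1)
    linarith [one_le_rpow_of_pos_of_le_one_of_nonpos (hb0.trans hx.1) hx.2 (neg_nonpos.2 hα.le)]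
  have hφpos : ∀ x ∈ Ioi 1, 0 ≤ φ x := by
    intro x hx
    simp only [φ, mul_assoc]
    refine mul_nonneg ?_ (hφ_factor x (hb1.trans hx))
    linarith [rpow_le_one_of_one_le_of_nonpos hx.out.le (neg_nonpos.2 hα.le)]
  have hcont : ContinuousOn (paretoMaxPotential α n) (Icc b 1) := fun x hx =>
    (hasDerivAt_paretoMaxPotential hn (hb0.trans_le hx.1).ne').continuousAt.continuousWithinAt
  rw [hintegrand, integral_indicator measurableSet_Ioi,
    integral_Ioi_abs_of_hasDerivAt_of_sign_change hb1 hcont hderiv hφneg hφpos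
      (tendsto_paretoMaxPotential_atTop hα), paretoMaxPotential_threshold hα.ne' hn]
  ring

end

/-- Rescaled maxima of Pareto(α) samples vs Fréchet: `X_n = M_n/n^{1/α}` has density
`p_n(x) = α x^{-α-1}(1 - x^{-α}/n)^{n-1}` on `x ≥ n^{-1/α}`. With `c(x) = x^{α+1}` and
`T_n c(x) = (c p_n)'(x)/p_n(x)` one has
`(1/α) T_n c(x) = ((n-1)/n)(1 - x^{-α}/n)⁻¹` on the interior of the support, and
`E[|1 - (1/α) T_n c(X_n)|] = (2/(n-1))(1 - 1/n)^n ≤ (2/e)/(n-1)`. -/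
theorem stmt19 (α : ℝ) (hα : 0 < α) (n : ℕ) (hn : 2 ≤ n) (p : ℝ → ℝ)
    (hp : ∀ x : ℝ, p x =
      if (n : ℝ) ^ (-(1 : ℝ) / α) ≤ x then
        α * x ^ (-α - 1) * (1 - x ^ (-α) / (n : ℝ)) ^ (n - 1)
      else 0) :
    (∀ x : ℝ, (n : ℝ) ^ (-(1 : ℝ) / α) < x →
      (1 / α) * (deriv (fun y : ℝ => y ^ (α + 1) * p y) x / p x) =
        (((n : ℝ) - 1) / (n : ℝ)) * (1 - x ^ (-α) / (n : ℝ))⁻¹) ∧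
    ((∫ x, |1 - (1 / α) * (deriv (fun y : ℝ => y ^ (α + 1) * p y) x / p x)| * p x) =
        (2 / ((n : ℝ) - 1)) * (1 - 1 / (n : ℝ)) ^ n) ∧
    ((2 / ((n : ℝ) - 1)) * (1 - 1 / (n : ℝ)) ^ n ≤ (2 / Real.exp 1) / ((n : ℝ) - 1)) := by
  obtain rfl : p = paretoMaxDensity α n := funext hp
  have hn2 : (2 : ℝ) ≤ n := by exact_mod_cast hn
  have hn1 : (0 : ℝ) < n - 1 := by linarith
  refine ⟨fun x hx => steinTransform_paretoMaxDensity hα hn hx, ?_, ?_⟩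
  · calc _ = -2 * paretoMaxPotential α n 1 :=
          integral_abs_one_sub_steinTransform_mul_paretoMaxDensity hα hn
      _ = _ := by
        have hpow : (1 - 1 / (n : ℝ)) ^ n = (1 - 1 / (n : ℝ)) ^ (n - 1) * (1 - 1 / n) := by
          rw [← pow_succ, Nat.sub_add_cancel (by omega)]
        rw [paretoMaxPotential, scaledParetoCdf, one_rpow, hpow]
        field_simp
        ring
  · have hexp : (1 - 1 / (n : ℝ)) ^ n ≤ (exp 1)⁻¹ := by
      rw [← exp_neg]
      exact one_sub_div_pow_le_exp_neg (by linarith)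
    calc 2 / ((n : ℝ) - 1) * (1 - 1 / (n : ℝ)) ^ n ≤ 2 / ((n : ℝ) - 1) * (exp 1)⁻¹ :=
          mul_le_mul_of_nonneg_left hexp (div_pos two_pos hn1).le
      _ = 2 / exp 1 / ((n : ℝ) - 1) := by ring
end
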